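/- arXiv:1402.6625 — 6 statements merged into one kernel-verified Lean document; each statement's English description precedes it below -/
import Mathlib

section
/- Let B be a domain graded by a linearly ordered abelian group Λ. If c ∈ B is a nonzero homogeneous element and a, b ∈ B satisfy ab = c, then both a and b are homogeneous. -/
/-!
Compare lowest and highest terms. If `a` has lowest and highest degrees `m ≤ M` and `b` has
`n ≤ N`, then in `a * b` the only pair of degrees contributing to degree `m + n` is `(m, n)`, so,
since `B` has no zero divisors, the component of `a * b` of degree `m + n` is nonzero; likewise
for `M + N`. As `a * b` is homogeneous, `m + n = M + N`, which forces `m = M` and `n = N`.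
-/

open DirectSum

namespace DirectSum

section Decomposition

variable {ι M σ : Type*} [DecidableEq ι] [AddCommMonoid M] [SetLike σ M]
  [AddSubmonoidClass σ M] (ℳ : ι → σ) [Decomposition ℳ] [∀ (i) (x : ℳ i), Decidable (x ≠ 0)]
  {x : M}

theorem support_decompose_nonempty (hx : x ≠ 0) : (decompose ℳ x).support.Nonempty := by
  rw [Finset.nonempty_iff_ne_empty, Ne, DFinsupp.support_eq_empty, ← decompose_zero ℳ]
  exact (decompose ℳ).injective.ne hx

theorem mem_of_forall_mem_support_decompose {d : ι}
    (h : ∀ i ∈ (decompose ℳ x).support, i = d) : x ∈ ℳ d := by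
  rw [← sum_support_decompose ℳ x]
  exact sum_mem fun i hi => h i hi ▸ SetLike.coe_mem _

theorem isHomogeneousElem_of_min'_eq_max' [LinearOrder ι]
    (hx : (decompose ℳ x).support.Nonempty)
    (h : (decompose ℳ x).support.min' hx = (decompose ℳ x).support.max' hx) :
    SetLike.IsHomogeneousElem ℳ x :=
  ⟨_, mem_of_forall_mem_support_decompose ℳ fun _ hi =>
    le_antisymm (h ▸ Finset.le_max' _ _ hi) (Finset.min'_le _ _ hi)⟩

end Decomposition

variable {ι R σ : Type*} [DecidableEq ι] [AddMonoid ι] [Semiring R] [SetLike σ R]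
  [AddSubmonoidClass σ R] {A : ι → σ} [SetLike.GradedMonoid A]

theorem coe_mul_apply_add_of_unique {r r' : ⨁ i, A i} {m n : ι}
    (h : ∀ i j, r i ≠ 0 → r' j ≠ 0 → i + j = m + n → i = m ∧ j = n) :
    ((r * r') (m + n) : R) = r m * r' n := by
  classical
  rw [coe_mul_apply]
  refine Finset.sum_eq_single (m, n) (fun ⟨i, j⟩ hij hne => ?_) fun hmn => ?_
  · simp only [Finset.mem_filter, Finset.mem_product, DFinsupp.mem_support_iff] at hij
    obtain ⟨rfl, rfl⟩ := h i j hij.1.1 hij.1.2 hij.2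
    exact absurd rfl hne
  · simp only [Finset.mem_filter, Finset.mem_product, DFinsupp.mem_support_iff, and_true,
      not_and_or, not_not] at hmn
    rcases hmn with h0 | h0 <;> simp [h0]

end DirectSum

section GradedDomain

variable {ι R σ : Type*} [DecidableEq ι] [Semiring R] [NoZeroDivisors R] [SetLike σ R]
  [AddSubmonoidClass σ R] {x y : R} {d m n : ι}

theorem add_eq_of_mul_mem_of_unique [AddMonoid ι] (𝒜 : ι → σ) [GradedRing 𝒜]
    (hxy : x * y ∈ 𝒜 d) (hm : decompose 𝒜 x m ≠ 0) (hn : decompose 𝒜 y n ≠ 0)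
    (h : ∀ i j, decompose 𝒜 x i ≠ 0 → decompose 𝒜 y j ≠ 0 → i + j = m + n → i = m ∧ j = n) :
    m + n = d := by
  by_contra hne
  have hprod : (decompose 𝒜 (x * y) (m + n) : R) = decompose 𝒜 x m * decompose 𝒜 y n := by
    rw [decompose_mul, coe_mul_apply_add_of_unique h]
  rw [decompose_of_mem_ne 𝒜 hxy (Ne.symm hne)] at hprod
  exact mul_ne_zero (by simpa using hm) (by simpa using hn) hprod.symm

variable [AddCommMonoid ι] [LinearOrder ι] [IsOrderedCancelAddMonoid ι] (𝒜 : ι → σ)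
  [GradedRing 𝒜] [∀ (i) (x : 𝒜 i), Decidable (x ≠ 0)]

theorem add_eq_of_mul_mem_of_isLeast (hxy : x * y ∈ 𝒜 d)
    (hm : IsLeast (decompose 𝒜 x).support m) (hn : IsLeast (decompose 𝒜 y).support n) :
    m + n = d := by
  simp only [IsLeast, lowerBounds, Finset.mem_coe, DFinsupp.mem_support_iff] at hm hn
  exact add_eq_of_mul_mem_of_unique 𝒜 hxy hm.1 hn.1 fun i j hi hj hij =>
    ((add_eq_add_iff_eq_and_eq (hm.2 hi) (hn.2 hj)).1 hij.symm).imp Eq.symm Eq.symm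

theorem add_eq_of_mul_mem_of_isGreatest (hxy : x * y ∈ 𝒜 d)
    (hm : IsGreatest (decompose 𝒜 x).support m) (hn : IsGreatest (decompose 𝒜 y).support n) :
    m + n = d := by
  simp only [IsGreatest, upperBounds, Finset.mem_coe, DFinsupp.mem_support_iff] at hm hn
  exact add_eq_of_mul_mem_of_unique 𝒜 hxy hm.1 hn.1 fun i j hi hj hij =>
    (add_eq_add_iff_eq_and_eq (hm.2 hi) (hn.2 hj)).1 hij

end GradedDomain

/-- Let `B` be a domain graded by a linearly ordered abelian group `Λ`.
If `c ∈ B` is a nonzero homogeneous element and `a, b ∈ B` satisfy `a * b = c`, then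
both `a` and `b` are homogeneous. -/
theorem homogeneous_factors_of_homogeneous_in_graded_domain
    (Λ B : Type*) [AddCommGroup Λ] [LinearOrder Λ] [IsOrderedAddMonoid Λ] [DecidableEq Λ]
    [Ring B] [NoZeroDivisors B]
    (𝒜 : Λ → AddSubgroup B) [GradedRing 𝒜]
    (c : B) (hc : c ≠ 0) (hchom : SetLike.IsHomogeneousElem 𝒜 c)
    (a b : B) (hab : a * b = c) :
    SetLike.IsHomogeneousElem 𝒜 a ∧ SetLike.IsHomogeneousElem 𝒜 b := by
  classical
  subst hab
  obtain ⟨d, hd⟩ := hchom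
  have ha := support_decompose_nonempty 𝒜 (left_ne_zero_of_mul hc)
  have hb := support_decompose_nonempty 𝒜 (right_ne_zero_of_mul hc)
  have hlow := add_eq_of_mul_mem_of_isLeast 𝒜 hd (Finset.isLeast_min' _ ha)
    (Finset.isLeast_min' _ hb)
  have hhigh := add_eq_of_mul_mem_of_isGreatest 𝒜 hd (Finset.isGreatest_max' _ ha)
    (Finset.isGreatest_max' _ hb)
  obtain ⟨ha_eq, hb_eq⟩ := (add_eq_add_iff_eq_and_eq (Finset.min'_le_max' _ ha)
    (Finset.min'_le_max' _ hb)).1 (hlow.trans hhigh.symm)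
  exact ⟨isHomogeneousElem_of_min'_eq_max' 𝒜 ha ha_eq,
    isHomogeneousElem_of_min'_eq_max' 𝒜 hb hb_eq⟩
end

section
/- Let R be a commutative domain with 2 ≠ 0 in R, let x ∈ R be nonzero, and let A be the subring of 2×2 matrices over R consisting of matrices (a b; c d) with c ∈ xR. Then A is a free R-module with basis {e_{11}, e_{12}, x·e_{21}, e_{22}}, and the determinant of the 4×4 matrix (tr(z_i z_j)), where tr is the regular (left-multiplication) trace of A over R and (z_1,z_2,z_3,z_4) = (e_{11}, e_{12}, x e_{21}, e_{22}), equals −2^4 x^2. -/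
set_option synthInstance.maxHeartbeats 400000

/-!
In the basis `e₁₁, e₁₂, x e₂₁, e₂₂` left multiplication by `w ∈ A` has diagonal
`(w₁₁, w₁₁, w₂₂, w₂₂)`, so the regular trace of `A` is twice the matrix trace. The Gram matrix
is therefore `2 • (tr (z_i z_j))`, and `(tr (z_i z_j))` is the identity on `z₀, z₃` and the
hyperbolic block `(0 x; x 0)` on `z₁, z₂`, of determinant `-x²`.
-/

open Matrix

namespace TriangularOrder

variable {R : Type*} [CommRing R]

def basisMatrices (x : R) : Fin 4 → Matrix (Fin 2) (Fin 2) R :=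
  ![single 0 0 1, single 0 1 1, single 1 0 x, single 1 1 1]

theorem sum_smul_basisMatrices (x : R) (c : Fin 4 → R) :
    ∑ i, c i • basisMatrices x i = !![c 0, c 1; x * c 2, c 3] := by
  ext i j
  fin_cases i <;> fin_cases j <;> simp [basisMatrices, Fin.sum_univ_four, mul_comm]

theorem linearIndependent_basisMatrices [IsDomain R] {x : R} (hx : x ≠ 0) :
    LinearIndependent R (basisMatrices x) := by
  refine Fintype.linearIndependent_iff.2 fun c hc i => ?_
  rw [sum_smul_basisMatrices] at hc
  have h00 := congrFun (congrFun hc 0) 0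
  have h01 := congrFun (congrFun hc 0) 1
  have h10 := congrFun (congrFun hc 1) 0
  have h11 := congrFun (congrFun hc 1) 1
  simp only [of_apply, cons_val', cons_val_zero, cons_val_one, empty_val', cons_val_fin_one,
    Matrix.zero_apply] at h00 h01 h10 h11
  fin_cases i
  exacts [h00, h01, (mul_eq_zero.1 h10).resolve_left hx, h11]

theorem trace_mul_basisMatrices (x : R) :
    (of fun i j => trace (basisMatrices x i * basisMatrices x j)) =
      !![1, 0, 0, 0; 0, 0, x, 0; 0, x, 0, 0; 0, 0, 0, 1] := by
  ext i j
  fin_cases i <;> fin_cases j <;> simp [basisMatrices, trace_fin_two]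

theorem det_trace_mul_basisMatrices (x : R) :
    (of fun i j => trace (basisMatrices x i * basisMatrices x j)).det = -x ^ 2 := by
  rw [trace_mul_basisMatrices]
  simp [det_succ_row_zero, Fin.sum_univ_succ]
  ring

variable {x : R} {A : Subalgebra R (Matrix (Fin 2) (Fin 2) R)} {z : Fin 4 → A}

theorem coe_sum_smul (hz : ∀ i, (z i : Matrix (Fin 2) (Fin 2) R) = basisMatrices x i)
    (c : Fin 4 → R) :
    ((∑ i, c i • z i : A) : Matrix (Fin 2) (Fin 2) R) = !![c 0, c 1; x * c 2, c 3] := by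
  push_cast [hz]
  exact sum_smul_basisMatrices x c

theorem span_range_eq_top (hA : ∀ M ∈ A, x ∣ M 1 0)
    (hz : ∀ i, (z i : Matrix (Fin 2) (Fin 2) R) = basisMatrices x i) :
    Submodule.span R (Set.range z) = ⊤ := by
  refine eq_top_iff.2 fun v _ => (Submodule.mem_span_range_iff_exists_fun R).2 ?_
  obtain ⟨r, hr⟩ := hA v v.2
  refine ⟨![v.1 0 0, v.1 0 1, r, v.1 1 1], Subtype.ext ?_⟩
  rw [coe_sum_smul hz]
  ext i j
  fin_cases i <;> fin_cases j <;> simp [hr]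

noncomputable def basis [IsDomain R] (hx : x ≠ 0) (hA : ∀ M ∈ A, x ∣ M 1 0)
    (hz : ∀ i, (z i : Matrix (Fin 2) (Fin 2) R) = basisMatrices x i) :
    Module.Basis (Fin 4) R A :=
  .mk (.of_comp A.val.toLinearMap <| (funext hz : _ ∘ z = _) ▸ linearIndependent_basisMatrices hx)
    (span_range_eq_top hA hz).ge

theorem coe_basis [IsDomain R] (hx : x ≠ 0) (hA : ∀ M ∈ A, x ∣ M 1 0)
    (hz : ∀ i, (z i : Matrix (Fin 2) (Fin 2) R) = basisMatrices x i) :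
    ⇑(basis hx hA hz) = z :=
  funext <| Module.Basis.mk_apply _ _

theorem coe_eq_repr (hz : ∀ i, (z i : Matrix (Fin 2) (Fin 2) R) = basisMatrices x i)
    (b : Module.Basis (Fin 4) R A) (hb : ⇑b = z) (v : A) :
    (v : Matrix (Fin 2) (Fin 2) R) = !![b.repr v 0, b.repr v 1; x * b.repr v 2, b.repr v 3] := by
  conv_lhs => rw [← b.sum_repr v, hb]
  exact coe_sum_smul hz _

theorem trace_mulLeft [IsDomain R] (hx : x ≠ 0)
    (hz : ∀ i, (z i : Matrix (Fin 2) (Fin 2) R) = basisMatrices x i)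
    (b : Module.Basis (Fin 4) R A) (hb : ⇑b = z) (w : A) :
    LinearMap.trace R A (LinearMap.mulLeft R w) = 2 * trace (w : Matrix (Fin 2) (Fin 2) R) := by
  have hc := coe_eq_repr hz b hb
  have h0 := congrFun (congrFun (hc (w * z 0)) 0) 0
  have h1 := congrFun (congrFun (hc (w * z 1)) 0) 1
  have h2 := congrFun (congrFun (hc (w * z 2)) 1) 0
  have h3 := congrFun (congrFun (hc (w * z 3)) 1) 1
  simp only [MulMemClass.coe_mul, hz, basisMatrices, mul_single_apply_same, mul_one,
    of_apply, cons_val', cons_val_zero, cons_val_one, cons_val, cons_val_fin_one] at h0 h1 h2 h3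
  have h2' : b.repr (w * z 2) 2 = w.1 1 1 := mul_left_cancel₀ hx (by rw [← h2, mul_comm])
  rw [LinearMap.trace_eq_matrix_trace R b, Matrix.trace, Fin.sum_univ_four]
  simp only [LinearMap.toMatrix_apply, diag, LinearMap.mulLeft_apply, hb]
  rw [← h0, ← h1, h2', ← h3, trace_fin_two]
  ring

end TriangularOrder

open TriangularOrder in
theorem discriminant_of_triangular_order_general
    (R : Type*) [CommRing R] [IsDomain R]
    (x : R) (hx : x ≠ 0)
    (A : Subalgebra R (Matrix (Fin 2) (Fin 2) R))
    (hA : ∀ M : Matrix (Fin 2) (Fin 2) R, M ∈ A ↔ ∃ r : R, M 1 0 = x * r)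
    (z : Fin 4 → A)
    (hz0 : (z 0 : Matrix (Fin 2) (Fin 2) R) = Matrix.single 0 0 1)
    (hz1 : (z 1 : Matrix (Fin 2) (Fin 2) R) = Matrix.single 0 1 1)
    (hz2 : (z 2 : Matrix (Fin 2) (Fin 2) R) = Matrix.single 1 0 x)
    (hz3 : (z 3 : Matrix (Fin 2) (Fin 2) R) = Matrix.single 1 1 1) :
    (∃ bas : Module.Basis (Fin 4) R A, ∀ i, bas i = z i) ∧
    Matrix.det (Matrix.of fun i j =>
        LinearMap.trace R A (LinearMap.mulLeft R (z i * z j))) = -(2 ^ 4 * x ^ 2) := by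
  have hz : ∀ i, (z i : Matrix (Fin 2) (Fin 2) R) = basisMatrices x i := by
    intro i; fin_cases i <;> assumption
  have hdvd : ∀ M ∈ A, x ∣ M 1 0 := fun M hM => (hA M).1 hM
  set b := basis hx hdvd hz
  have hb : ⇑b = z := coe_basis hx hdvd hz
  refine ⟨⟨b, congrFun hb⟩, ?_⟩
  have hgram : (of fun i j => LinearMap.trace R A (LinearMap.mulLeft R (z i * z j))) =
      (2 : R) • of fun i j => trace (basisMatrices x i * basisMatrices x j) := by
    ext i j
    simp only [of_apply, Matrix.smul_apply, smul_eq_mul, trace_mulLeft hx hz b hb,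
      MulMemClass.coe_mul, hz]
  rw [hgram, det_smul, det_trace_mul_basisMatrices, Fintype.card_fin]
  ring

/-- Let `R` be a commutative domain with `2 ≠ 0`, `x ∈ R` nonzero, and
`A ⊆ M₂(R)` the subalgebra of matrices `(a b; c d)` with `c ∈ xR`.  Then `A` is a free
`R`-module with basis `{e₁₁, e₁₂, x e₂₁, e₂₂}`, and the determinant of the `4 × 4` matrix
`(tr (z_i z_j))`, where `tr` is the regular (left-multiplication) trace of `A` over `R`,
equals `-(2^4) x^2`. -/
theorem discriminant_of_triangular_order
    (R : Type*) [CommRing R] [IsDomain R] (h2 : (2 : R) ≠ 0)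
    (x : R) (hx : x ≠ 0)
    (A : Subalgebra R (Matrix (Fin 2) (Fin 2) R))
    (hA : ∀ M : Matrix (Fin 2) (Fin 2) R, M ∈ A ↔ ∃ r : R, M 1 0 = x * r)
    (z : Fin 4 → A)
    (hz0 : (z 0 : Matrix (Fin 2) (Fin 2) R) = Matrix.single 0 0 1)
    (hz1 : (z 1 : Matrix (Fin 2) (Fin 2) R) = Matrix.single 0 1 1)
    (hz2 : (z 2 : Matrix (Fin 2) (Fin 2) R) = Matrix.single 1 0 x)
    (hz3 : (z 3 : Matrix (Fin 2) (Fin 2) R) = Matrix.single 1 1 1) :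
    (∃ bas : Module.Basis (Fin 4) R A, ∀ i, bas i = z i) ∧
    Matrix.det (Matrix.of fun i j =>
        LinearMap.trace R A (LinearMap.mulLeft R (z i * z j))) = -(2 ^ 4 * x ^ 2) :=
  discriminant_of_triangular_order_general R x hx A hA z hz0 hz1 hz2 hz3
end

section
/- Let k be a field and A = k_{p_{ij}}[x_1,…,x_n] a skew polynomial ring. Fix s and suppose d = (d_1,…,d̂_s,…,d_n) ∈ ℕ^{n−1} satisfies ∏_{j≠s} p_{ij}^{d_j} = p_{is} for all i. Set f = x_1^{d_1} ⋯ x_{s−1}^{d_{s−1}} x_{s+1}^{d_{s+1}} ⋯ x_n^{d_n}. Then for any c ∈ k, the assignment x_s ↦ x_s + c f, x_i ↦ x_i (i ≠ s) extends to a k-algebra automorphism of A, and the assignment x_s ↦ c f, x_i ↦ 0 (i ≠ s) extends to a locally nilpotent k-derivation of A. -/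
/-!
The hypothesis on `d` says exactly that `x_i f = p_{si} f x_i` for every `i`: the monomial `f`
skew-commutes with the generators as `x_s` does. Hence `x_s + c f` may replace `x_s` in the
defining relations, which gives an algebra endomorphism; it fixes `f` because `f` does not
involve `x_s`, so the endomorphisms for `c` and `-c` are mutually inverse. In the same way
`x_s + ε c f` may replace `x_s` in the dual numbers `A[ε]`, and the `ε`-part of the resulting
algebra map `A → A[ε]` is the derivation `∂`. It kills `f`, hence `∂²` kills every generator,
and the elements killed by some power of a derivation form a subalgebra.
-/

noncomputable section

/-- The defining relations of the skew polynomial ring `k_{p_{ij}}[x_1, …, x_n]`: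
for `i < j`, `x_j * x_i` is identified with `p i j * (x_i * x_j)`. -/
def skewRel (k : Type*) [CommRing k] (n : ℕ) (p : Fin n → Fin n → k) :
    FreeAlgebra k (Fin n) → FreeAlgebra k (Fin n) → Prop := fun a b =>
  ∃ i j : Fin n, i < j ∧ a = FreeAlgebra.ι k j * FreeAlgebra.ι k i ∧
    b = algebraMap k _ (p i j) * (FreeAlgebra.ι k i * FreeAlgebra.ι k j)

/-- The skew polynomial ring `k_{p_{ij}}[x_1, …, x_n]`. -/
abbrev SkewPoly (k : Type*) [CommRing k] (n : ℕ) (p : Fin n → Fin n → k) :=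
  RingQuot (skewRel k n p)

/-- The generator `x_i` of the skew polynomial ring. -/
def SkewPoly.X (k : Type*) [CommRing k] (n : ℕ) (p : Fin n → Fin n → k) (i : Fin n) :
    SkewPoly k n p :=
  RingQuot.mkAlgHom k (skewRel k n p) (FreeAlgebra.ι k i)

open Function

lemma prod_transpose_pow_eq {M : Type*} [CommMonoid M] {n : ℕ} {p : Fin n → Fin n → M}
    (hanti : ∀ i j, p i j * p j i = 1) {s : Fin n} {d : Fin n → ℕ} (hds : d s = 0) {i : Fin n}
    (hd : ∏ j ∈ Finset.univ.erase s, p i j ^ d j = p i s) :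
    ∏ j, p j i ^ d j = p s i := by
  have hfull : ∏ j, p i j ^ d j = p i s := by
    rw [← Finset.mul_prod_erase _ _ (Finset.mem_univ s), hds, pow_zero, one_mul, hd]
  calc ∏ j, p j i ^ d j = ((∏ j, p j i ^ d j) * ∏ j, p i j ^ d j) * p s i := by
        rw [hfull, mul_assoc, hanti, mul_one]
    _ = p s i := by rw [← Finset.prod_mul_distrib]; simp [← mul_pow, hanti]

namespace TrivSqZeroExt

variable {k A : Type*} [CommSemiring k] [Semiring A] [Algebra k A]

/-- Mathlib's `Derivation` needs a commutative algebra; for general `A`, the algebra sections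
of `fst : A[ε] → A` are exactly the maps `a ↦ a + ε ∂a` with `∂` a derivation. -/
@[simps]
def sndComp (ψ : A →ₐ[k] TrivSqZeroExt A A) : A →ₗ[k] A where
  toFun a := (ψ a).snd
  map_add' a b := by simp
  map_smul' c a := by simp

lemma sndComp_mul {ψ : A →ₐ[k] TrivSqZeroExt A A}
    (hψ : (fstHom k A A).comp ψ = AlgHom.id k A) (a b : A) :
    sndComp ψ (a * b) = sndComp ψ a * b + a * sndComp ψ b := by
  have hfst (x : A) : (ψ x).fst = x := DFunLike.congr_fun hψ x
  simp [snd_mul, hfst, add_comm]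

end TrivSqZeroExt

section LocallyNilpotent

variable {k A : Type*} [CommSemiring k] [Ring A] [Algebra k A] {D : A →ₗ[k] A}
  (hD : ∀ a b, D (a * b) = D a * b + a * D b)
include hD

lemma map_one_eq_zero_of_leibniz : D 1 = 0 := by
  simpa using hD 1 1

lemma iterate_mul_eq_zero_of_leibniz {a b : A} {m l : ℕ} (ha : (⇑D)^[m] a = 0)
    (hb : (⇑D)^[l] b = 0) : (⇑D)^[m + l] (a * b) = 0 := by
  induction m generalizing a l b with
  | zero => simp_all [iterate_map_zero]
  | succ m ihm =>
    induction l generalizing b with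
    | zero => simp_all [iterate_map_zero]
    | succ l ihl =>
      rw [← add_assoc, iterate_succ_apply, hD, iterate_map_add]
      have hDa : (⇑D)^[m + (l + 1)] (D a * b) = 0 := ihm (by rwa [← iterate_succ_apply]) hb
      have hDb : (⇑D)^[m + 1 + l] (a * D b) = 0 := ihl (by rwa [← iterate_succ_apply])
      rw [hDb, add_zero, show m + 1 + l = m + (l + 1) by omega, hDa]

def locallyNilpotentSubalgebra : Subalgebra k A where
  carrier := {a | ∃ m, (⇑D)^[m] a = 0}
  mul_mem' := fun ⟨m, ha⟩ ⟨l, hb⟩ => ⟨m + l, iterate_mul_eq_zero_of_leibniz hD ha hb⟩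
  add_mem' := fun {a b} ⟨m, ha⟩ ⟨l, hb⟩ => ⟨m + l, by
    have ha' : (⇑D)^[m + l] a = 0 := by rw [add_comm, iterate_add_apply, ha, iterate_map_zero]
    have hb' : (⇑D)^[m + l] b = 0 := by rw [iterate_add_apply, hb, iterate_map_zero]
    rw [iterate_map_add, ha', hb', add_zero]⟩
  algebraMap_mem' r :=
    ⟨1, by simp [Algebra.algebraMap_eq_smul_one, map_one_eq_zero_of_leibniz hD]⟩

lemma exists_iterate_eq_zero_of_adjoin_eq_top {s : Set A} (hs : Algebra.adjoin k s = ⊤)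
    (hsD : ∀ x ∈ s, ∃ m, (⇑D)^[m] x = 0) (a : A) : ∃ m, (⇑D)^[m] a = 0 := by
  have : Algebra.adjoin k s ≤ locallyNilpotentSubalgebra hD := Algebra.adjoin_le hsD
  exact this (hs ▸ Algebra.mem_top)

end LocallyNilpotent

namespace SkewPoly

variable {k : Type*} [CommRing k] {n : ℕ} {p : Fin n → Fin n → k}

lemma X_mul_X_of_lt {i j : Fin n} (hij : i < j) :
    X k n p j * X k n p i = p i j • (X k n p i * X k n p j) := by
  simpa [X, Algebra.smul_def] using
    RingQuot.mkAlgHom_rel k (s := skewRel k n p) ⟨i, j, hij, rfl, rfl⟩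

lemma algHom_ext {B : Type*} [Semiring B] [Algebra k B] {φ ψ : SkewPoly k n p →ₐ[k] B}
    (h : ∀ i, φ (X k n p i) = ψ (X k n p i)) : φ = ψ :=
  RingQuot.ringQuot_ext' _ _ _ <| FreeAlgebra.hom_ext <| funext h

lemma adjoin_range_X : Algebra.adjoin k (Set.range (X k n p)) = ⊤ := by
  rw [show X k n p = RingQuot.mkAlgHom k (skewRel k n p) ∘ FreeAlgebra.ι k from rfl,
    Set.range_comp, ← AlgHom.map_adjoin, FreeAlgebra.adjoin_range_ι, Algebra.map_top,
    AlgHom.range_eq_top]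
  exact RingQuot.mkAlgHom_surjective k _

def lift {B : Type*} [Semiring B] [Algebra k B] (v : Fin n → B)
    (hv : ∀ i j, i < j → v j * v i = p i j • (v i * v j)) : SkewPoly k n p →ₐ[k] B :=
  RingQuot.liftAlgHom k ⟨FreeAlgebra.lift k v, by
    rintro _ _ ⟨i, j, hij, rfl, rfl⟩
    simpa [Algebra.smul_def] using hv i j hij⟩

@[simp]
lemma lift_X {B : Type*} [Semiring B] [Algebra k B] (v : Fin n → B)
    (hv : ∀ i j, i < j → v j * v i = p i j • (v i * v j)) (i : Fin n) :
    lift v hv (X k n p i) = v i := by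
  simp [lift, X]

def monomial (d : Fin n → ℕ) : SkewPoly k n p :=
  ((List.finRange n).map fun i => X k n p i ^ d i).prod

lemma monomial_mem_adjoin {s : Fin n} {d : Fin n → ℕ} (hds : d s = 0) :
    monomial (p := p) d ∈ Algebra.adjoin k (X k n p '' {s}ᶜ) := by
  refine Subalgebra.list_prod_mem _ fun a ha => ?_
  obtain ⟨i, -, rfl⟩ := List.mem_map.mp ha
  by_cases his : i = s
  · simp [his, hds]
  · exact pow_mem (Algebra.subset_adjoin (Set.mem_image_of_mem _ his)) _

def skewCommutant (s : Fin n) : Submodule k (SkewPoly k n p) where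
  carrier := {y | ∀ i, X k n p i * y = p s i • (y * X k n p i)}
  add_mem' ha hb i := by rw [mul_add, ha i, hb i, add_mul, smul_add]
  zero_mem' i := by simp
  smul_mem' c y hy i := by simp only [mul_smul_comm, hy i, smul_mul_assoc, smul_comm c]

lemma update_mul_update_of_lt {B : Type*} [Semiring B] [Algebra k B]
    (hanti : ∀ i j, p i j * p j i = 1) {v : Fin n → B}
    (hv : ∀ i j, i < j → v j * v i = p i j • (v i * v j)) {s : Fin n} {z : B}
    (hz : ∀ i, v i * z = p s i • (z * v i)) {i j : Fin n} (hij : i < j) :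
    update v s z j * update v s z i = p i j • (update v s z i * update v s z j) := by
  by_cases his : i = s
  · subst his
    simp [hij.ne', hz j]
  by_cases hjs : j = s
  · subst hjs
    simp [his, hz i, smul_smul, hanti]
  · simp [his, hjs, hv i j hij]

section Elementary

variable (hanti : ∀ i j, p i j * p j i = 1) (hdiag : ∀ i, p i i = 1)
include hanti hdiag

lemma X_mul_X (i j : Fin n) :
    X k n p j * X k n p i = p i j • (X k n p i * X k n p j) := by
  rcases lt_trichotomy i j with h | rfl | h
  · exact X_mul_X_of_lt h
  · simp [hdiag]
  · rw [X_mul_X_of_lt h, smul_smul, hanti, one_smul]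

lemma X_mul_X_pow (i j : Fin n) (m : ℕ) :
    X k n p i * X k n p j ^ m = p j i ^ m • (X k n p j ^ m * X k n p i) := by
  induction m with
  | zero => simp
  | succ m ih =>
    rw [pow_succ, ← mul_assoc, ih, smul_mul_assoc, mul_assoc, X_mul_X hanti hdiag j i,
      mul_smul_comm, smul_smul, pow_succ, mul_assoc]

lemma X_mul_monomial (d : Fin n → ℕ) (i : Fin n) :
    X k n p i * monomial d = (∏ j, p j i ^ d j) • (monomial d * X k n p i) := by
  rw [Fin.prod_univ_def, monomial]
  induction List.finRange n with
  | nil => simp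
  | cons a L ih =>
    simp only [List.map_cons, List.prod_cons]
    rw [← mul_assoc, X_mul_X_pow hanti hdiag, smul_mul_assoc, mul_assoc, ih, mul_smul_comm,
      smul_smul, mul_assoc]

lemma X_mem_skewCommutant (s : Fin n) :
    X k n p s ∈ skewCommutant s :=
  fun i => X_mul_X hanti hdiag s i

lemma monomial_mem_skewCommutant {s : Fin n} {d : Fin n → ℕ} (hds : d s = 0)
    (hd : ∀ i, ∏ j ∈ Finset.univ.erase s, p i j ^ d j = p i s) :
    monomial d ∈ skewCommutant (p := p) s := fun i => by
  rw [X_mul_monomial hanti hdiag, prod_transpose_pow_eq hanti hds (hd i)]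

def elementaryHom {s : Fin n} {y : SkewPoly k n p} (hy : y ∈ skewCommutant s) :
    SkewPoly k n p →ₐ[k] SkewPoly k n p :=
  lift (update (X k n p) s (X k n p s + y)) fun _ _ =>
    update_mul_update_of_lt hanti (fun _ _ => X_mul_X_of_lt)
      (add_mem (X_mem_skewCommutant hanti hdiag s) hy)

lemma elementaryHom_X {s : Fin n} {y : SkewPoly k n p} (hy : y ∈ skewCommutant s) (i : Fin n) :
    elementaryHom hanti hdiag hy (X k n p i) = update (X k n p) s (X k n p s + y) i :=
  lift_X _ _ i

lemma elementaryHom_apply_of_mem_adjoin {s : Fin n} {y z : SkewPoly k n p}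
    (hy : y ∈ skewCommutant s) (hz : z ∈ Algebra.adjoin k (X k n p '' {s}ᶜ)) :
    elementaryHom hanti hdiag hy z = z := by
  refine AlgHom.eqOn_adjoin_iff (φ := elementaryHom hanti hdiag hy) (ψ := AlgHom.id k _)
    |>.mpr ?_ hz
  rintro _ ⟨i, hi, rfl⟩
  simp [elementaryHom_X, update_of_ne hi]

lemma elementaryHom_comp_elementaryHom_neg {s : Fin n} {y : SkewPoly k n p}
    (hy : y ∈ skewCommutant s) (hy' : y ∈ Algebra.adjoin k (X k n p '' {s}ᶜ)) :
    (elementaryHom hanti hdiag hy).comp (elementaryHom hanti hdiag (neg_mem hy)) =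
      AlgHom.id k _ := by
  refine algHom_ext fun i => ?_
  by_cases his : i = s
  · subst his
    simp [elementaryHom_X, elementaryHom_apply_of_mem_adjoin hanti hdiag hy (neg_mem hy')]
  · simp [elementaryHom_X, his]

def elementaryEquiv {s : Fin n} {y : SkewPoly k n p} (hy : y ∈ skewCommutant s)
    (hy' : y ∈ Algebra.adjoin k (X k n p '' {s}ᶜ)) : SkewPoly k n p ≃ₐ[k] SkewPoly k n p :=
  AlgEquiv.ofAlgHom (elementaryHom hanti hdiag hy) (elementaryHom hanti hdiag (neg_mem hy))
    (elementaryHom_comp_elementaryHom_neg hanti hdiag hy hy')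
    (by simpa using elementaryHom_comp_elementaryHom_neg hanti hdiag (neg_mem hy) (neg_mem hy'))

lemma elementaryEquiv_X {s : Fin n} {y : SkewPoly k n p} (hy : y ∈ skewCommutant s)
    (hy' : y ∈ Algebra.adjoin k (X k n p '' {s}ᶜ)) (i : Fin n) :
    elementaryEquiv hanti hdiag hy hy' (X k n p i) = update (X k n p) s (X k n p s + y) i :=
  elementaryHom_X hanti hdiag hy i

open TrivSqZeroExt

/-- The map `a ↦ a + ε ∂a` into the dual numbers over `SkewPoly`, for the derivation `∂`
with `∂ x_s = y` and `∂ x_i = 0` for `i ≠ s`. -/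
def elementaryDerivationLift {s : Fin n} {y : SkewPoly k n p} (hy : y ∈ skewCommutant s) :
    SkewPoly k n p →ₐ[k] TrivSqZeroExt (SkewPoly k n p) (SkewPoly k n p) :=
  lift (update (fun i => inl (X k n p i)) s (inl (X k n p s) + inr y)) fun _ _ =>
    update_mul_update_of_lt hanti
      (fun i j hij => by rw [← inl_mul, X_mul_X_of_lt hij, inl_smul, inl_mul])
      (fun i => by ext <;> simp [X_mem_skewCommutant hanti hdiag s i, hy i])

lemma elementaryDerivationLift_X {s : Fin n} {y : SkewPoly k n p} (hy : y ∈ skewCommutant s)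
    (i : Fin n) :
    elementaryDerivationLift hanti hdiag hy (X k n p i) =
      update (fun i => inl (X k n p i)) s (inl (X k n p s) + inr y) i :=
  lift_X _ _ i

lemma fstHom_comp_elementaryDerivationLift {s : Fin n} {y : SkewPoly k n p}
    (hy : y ∈ skewCommutant s) :
    (fstHom k _ _).comp (elementaryDerivationLift hanti hdiag hy) = AlgHom.id k _ := by
  refine algHom_ext fun i => ?_
  by_cases his : i = s
  · subst his; simp [elementaryDerivationLift_X]
  · simp [elementaryDerivationLift_X, his]

def elementaryDerivation {s : Fin n} {y : SkewPoly k n p} (hy : y ∈ skewCommutant s) :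
    SkewPoly k n p →ₗ[k] SkewPoly k n p :=
  sndComp (elementaryDerivationLift hanti hdiag hy)

lemma elementaryDerivation_mul {s : Fin n} {y : SkewPoly k n p} (hy : y ∈ skewCommutant s)
    (a b : SkewPoly k n p) :
    elementaryDerivation hanti hdiag hy (a * b) =
      elementaryDerivation hanti hdiag hy a * b + a * elementaryDerivation hanti hdiag hy b :=
  sndComp_mul (fstHom_comp_elementaryDerivationLift hanti hdiag hy) a b

lemma elementaryDerivation_X {s : Fin n} {y : SkewPoly k n p} (hy : y ∈ skewCommutant s)
    (i : Fin n) :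
    elementaryDerivation hanti hdiag hy (X k n p i) = if i = s then y else 0 := by
  by_cases his : i = s
  · subst his; simp [elementaryDerivation, elementaryDerivationLift_X]
  · simp [elementaryDerivation, elementaryDerivationLift_X, his]

lemma elementaryDerivation_apply_of_mem_adjoin {s : Fin n} {y z : SkewPoly k n p}
    (hy : y ∈ skewCommutant s) (hz : z ∈ Algebra.adjoin k (X k n p '' {s}ᶜ)) :
    elementaryDerivation hanti hdiag hy z = 0 := by
  have hfix : elementaryDerivationLift hanti hdiag hy z = inl z := by
    refine AlgHom.eqOn_adjoin_iff (φ := elementaryDerivationLift hanti hdiag hy)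
      (ψ := inlAlgHom k _ _) |>.mpr ?_ hz
    rintro _ ⟨i, hi, rfl⟩
    simp [elementaryDerivationLift_X, update_of_ne hi]
  simp [elementaryDerivation, hfix]

lemma exists_iterate_elementaryDerivation_eq_zero {s : Fin n} {y : SkewPoly k n p}
    (hy : y ∈ skewCommutant s) (hy' : y ∈ Algebra.adjoin k (X k n p '' {s}ᶜ))
    (a : SkewPoly k n p) : ∃ m, (⇑(elementaryDerivation hanti hdiag hy))^[m] a = 0 := by
  refine exists_iterate_eq_zero_of_adjoin_eq_top (elementaryDerivation_mul hanti hdiag hy)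
    adjoin_range_X ?_ a
  rintro _ ⟨i, rfl⟩
  refine ⟨2, ?_⟩
  by_cases his : i = s
  · subst his
    simp [elementaryDerivation_X, elementaryDerivation_apply_of_mem_adjoin hanti hdiag hy hy']
  · simp [elementaryDerivation_X, his]

end Elementary

end SkewPoly

open SkewPoly in
/-- Let `A = k_{p_{ij}}[x_1, …, x_n]`, fix `s`, and let
`d ∈ ℕ^{n-1}` (encoded as `d : Fin n → ℕ` with `d s = 0`) satisfy
`∏_{j ≠ s} p i j ^ d j = p i s` for all `i`.  With
`f = x_1^{d_1} ⋯ x̂_s ⋯ x_n^{d_n}` and `c ∈ k`, the assignment `x_s ↦ x_s + c • f`,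
`x_i ↦ x_i` (`i ≠ s`) extends to a `k`-algebra automorphism of `A`, and the assignment
`x_s ↦ c • f`, `x_i ↦ 0` (`i ≠ s`) extends to a locally nilpotent `k`-derivation. -/
theorem elementary_automorphism_and_lnd_of_skew_poly
    (k : Type*) [Field k] (n : ℕ) (p : Fin n → Fin n → k)
    (hanti : ∀ i j, p i j * p j i = 1) (hdiag : ∀ i, p i i = 1)
    (s : Fin n) (d : Fin n → ℕ) (hds : d s = 0)
    (hd : ∀ i, ∏ j ∈ Finset.univ.erase s, p i j ^ d j = p i s)
    (f : SkewPoly k n p)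
    (hf : f = ((List.finRange n).map (fun (i : Fin n) => SkewPoly.X k n p i ^ d i)).prod)
    (c : k) :
    (∃ g : SkewPoly k n p ≃ₐ[k] SkewPoly k n p,
      ∀ i : Fin n, g (SkewPoly.X k n p i) =
        if i = s then SkewPoly.X k n p s + c • f else SkewPoly.X k n p i) ∧
    (∃ D : SkewPoly k n p →ₗ[k] SkewPoly k n p,
      (∀ a b : SkewPoly k n p, D (a * b) = D a * b + a * D b) ∧
      (∀ i : Fin n, D (SkewPoly.X k n p i) = if i = s then c • f else 0) ∧
      (∀ a : SkewPoly k n p, ∃ m : ℕ, (⇑D)^[m] a = 0)) := by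
  have hfm : f = monomial d := hf
  have hcf : c • f ∈ skewCommutant s :=
    hfm ▸ Submodule.smul_mem _ c (monomial_mem_skewCommutant hanti hdiag hds hd)
  have hcf' : c • f ∈ Algebra.adjoin k (X k n p '' {s}ᶜ) :=
    hfm ▸ Subalgebra.smul_mem _ (monomial_mem_adjoin hds) c
  refine ⟨⟨elementaryEquiv hanti hdiag hcf hcf', fun i => ?_⟩,
    ⟨elementaryDerivation hanti hdiag hcf, elementaryDerivation_mul hanti hdiag hcf, fun i => ?_,
      exists_iterate_elementaryDerivation_eq_zero hanti hdiag hcf hcf'⟩⟩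
  · rw [elementaryEquiv_X, update_apply]
  · exact elementaryDerivation_X hanti hdiag hcf i
end
end

section
/- Let k be a domain and A = k_{p_{ij}}[x_1,…,x_n] a skew polynomial ring such that no x_i is central. If C is a commutative domain containing k, then for every k-linear derivation ∂ of A ⊗_k C, the constant term of ∂(x_i) is zero for all i. -/
noncomputable section

open scoped TensorProduct

/-- The counit of the skew polynomial ring, sending each generator `x_i` to `0`;
it computes the constant term of an element. -/
def SkewPoly.counit (k : Type*) [CommRing k] (n : ℕ) (p : Fin n → Fin n → k) :
    SkewPoly k n p →ₐ[k] k :=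
  RingQuot.liftAlgHom k ⟨FreeAlgebra.lift k (fun _ => (0 : k)), by
    rintro x y ⟨i, j, hij, rfl, rfl⟩
    simp⟩

/-- The constant-term map of `A ⊗_k C`, the `k`-algebra map sending each
generator `x_i ⊗ 1` to `0` and `1 ⊗ c` to `c`. -/
def SkewPoly.constantTerm (k : Type*) [CommRing k] (n : ℕ) (p : Fin n → Fin n → k)
    (C : Type*) [CommRing C] [Algebra k C] :
    (SkewPoly k n p ⊗[k] C) →ₐ[k] C :=
  (Algebra.TensorProduct.lid k C).toAlgHom.comp
    (Algebra.TensorProduct.map (SkewPoly.counit k n p) (AlgHom.id k C))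

section Aux
variable (k : Type*) [CommRing k] (n : ℕ) (p : Fin n → Fin n → k)
variable (C : Type*) [CommRing C] [Algebra k C]

/-- The generator images for the dual-number representation: `x_j ↦ ε`, other `x_m ↦ 0`. -/
def skewPsi0Fun (j : Fin n) : Fin n → DualNumber C := fun m => if m = j then DualNumber.eps else 0

lemma skewPsi0_rel (j : Fin n) : ∀ ⦃x y⦄, skewRel k n p x y →
    FreeAlgebra.lift k (skewPsi0Fun n C j) x = FreeAlgebra.lift k (skewPsi0Fun n C j) y := by
  rintro x y ⟨a, b, hab, rfl, rfl⟩
  have h0 : ∀ (u v : DualNumber C), (u = DualNumber.eps ∨ u = 0) →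
      (v = DualNumber.eps ∨ v = 0) → u * v = 0 := by
    rintro u v (rfl|rfl) (rfl|rfl) <;> simp [DualNumber.eps_mul_eps]
  simp only [map_mul, FreeAlgebra.lift_ι_apply, AlgHom.commutes, skewPsi0Fun]
  have hx : ∀ m : Fin n, (if m = j then DualNumber.eps (R := C) else 0) = DualNumber.eps ∨
      (if m = j then DualNumber.eps (R := C) else 0) = 0 := fun m => by split <;> simp
  rw [h0 _ _ (hx b) (hx a), h0 _ _ (hx a) (hx b), mul_zero]

/-- The dual-number representation of the skew polynomial ring relative to the index `j`. -/
def skewPsiA (j : Fin n) : SkewPoly k n p →ₐ[k] DualNumber C :=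
  RingQuot.liftAlgHom k ⟨FreeAlgebra.lift k (skewPsi0Fun n C j), skewPsi0_rel k n p C j⟩

lemma skewPsiA_X (j m : Fin n) :
    skewPsiA k n p C j (SkewPoly.X k n p m) = if m = j then DualNumber.eps else 0 := by
  rw [SkewPoly.X, skewPsiA, RingQuot.liftAlgHom_mkAlgHom_apply, FreeAlgebra.lift_ι_apply]
  rfl

/-- The dual-number representation of `A ⊗[k] C`. -/
def skewPsi (j : Fin n) : (SkewPoly k n p ⊗[k] C) →ₐ[k] DualNumber C :=
  Algebra.TensorProduct.lift (skewPsiA k n p C j) (IsScalarTower.toAlgHom k C (DualNumber C))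
    (fun _ _ => Commute.all _ _)

lemma skewPsi_tmul (j : Fin n) (a : SkewPoly k n p) (c : C) :
    skewPsi k n p C j (a ⊗ₜ[k] c) = skewPsiA k n p C j a * algebraMap C (DualNumber C) c := by
  simp [skewPsi, Algebra.TensorProduct.lift_tmul]

lemma fst_skewPsi (j : Fin n) (z : SkewPoly k n p ⊗[k] C) :
    (skewPsi k n p C j z).fst = SkewPoly.constantTerm k n p C z := by
  suffices h : (TrivSqZeroExt.fstHom k C C).comp (skewPsi k n p C j) =
      SkewPoly.constantTerm k n p C from DFunLike.congr_fun h z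
  apply Algebra.TensorProduct.ext
  · apply RingQuot.ringQuot_ext'
    apply FreeAlgebra.hom_ext
    funext m
    show (TrivSqZeroExt.fstHom k C C) (skewPsi k n p C j ((SkewPoly.X k n p m) ⊗ₜ[k] 1)) =
      SkewPoly.constantTerm k n p C ((SkewPoly.X k n p m) ⊗ₜ[k] 1)
    have hcu : SkewPoly.counit k n p (SkewPoly.X k n p m) = 0 := by
      rw [SkewPoly.counit, SkewPoly.X, RingQuot.liftAlgHom_mkAlgHom_apply, FreeAlgebra.lift_ι_apply]
    rw [skewPsi_tmul, skewPsiA_X, map_one, mul_one]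
    simp [SkewPoly.constantTerm, hcu]
    split <;> simp
  · apply AlgHom.ext
    intro c
    show (TrivSqZeroExt.fstHom k C C) (skewPsi k n p C j ((1 : SkewPoly k n p) ⊗ₜ[k] c)) =
      SkewPoly.constantTerm k n p C ((1 : SkewPoly k n p) ⊗ₜ[k] c)
    rw [skewPsi_tmul, map_one, one_mul]
    simp [SkewPoly.constantTerm, TrivSqZeroExt.algebraMap_eq_inl', TrivSqZeroExt.fst_inl]

end Aux

/-- Let `k` be a domain, `A = k_{p_{ij}}[x_1, …, x_n]` with no `x_i`
central, and `C` a commutative domain containing `k`.  Then for every `k`-linear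
derivation `D` of `A ⊗_k C`, the constant term of `D (x_i ⊗ 1)` is zero for all `i`. -/
theorem constant_term_of_derivation_vanishes
    (k : Type*) [CommRing k] [IsDomain k] (n : ℕ) (p : Fin n → Fin n → k)
    (hanti : ∀ i j, p i j * p j i = 1) (hdiag : ∀ i, p i i = 1)
    (hnc : ∀ i, ∃ j, p i j ≠ 1)
    (C : Type*) [CommRing C] [IsDomain C] [Algebra k C]
    (hinj : Function.Injective (algebraMap k C))
    (D : (SkewPoly k n p ⊗[k] C) →ₗ[k] (SkewPoly k n p ⊗[k] C))
    (hLeibniz : ∀ a b : SkewPoly k n p ⊗[k] C, D (a * b) = D a * b + a * D b)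
    (i : Fin n) :
    SkewPoly.constantTerm k n p C (D (SkewPoly.X k n p i ⊗ₜ[k] (1 : C))) = 0 := by
  obtain ⟨j, hj⟩ := hnc i
  have hne : i ≠ j := fun h => hj (h ▸ hdiag i)
  -- the relation in A
  have hrelA : SkewPoly.X k n p j * SkewPoly.X k n p i =
      p i j • (SkewPoly.X k n p i * SkewPoly.X k n p j) := by
    rcases hne.lt_or_gt with h | h
    · have := RingQuot.mkAlgHom_rel k (s := skewRel k n p)
        ⟨i, j, h, rfl, rfl⟩
      simpa only [map_mul, map_smul, AlgHom.commutes, ← Algebra.smul_def, SkewPoly.X] using this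
    · have h2 : SkewPoly.X k n p i * SkewPoly.X k n p j =
          p j i • (SkewPoly.X k n p j * SkewPoly.X k n p i) := by
        have := RingQuot.mkAlgHom_rel k (s := skewRel k n p)
          ⟨j, i, h, rfl, rfl⟩
        simpa only [map_mul, map_smul, AlgHom.commutes, ← Algebra.smul_def, SkewPoly.X] using this
      rw [h2, smul_smul, hanti i j, one_smul]
  set u : SkewPoly k n p ⊗[k] C := SkewPoly.X k n p i ⊗ₜ[k] (1 : C) with hu
  set v : SkewPoly k n p ⊗[k] C := SkewPoly.X k n p j ⊗ₜ[k] (1 : C) with hv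
  have hrel : v * u = p i j • (u * v) := by
    rw [hu, hv, Algebra.TensorProduct.tmul_mul_tmul, Algebra.TensorProduct.tmul_mul_tmul,
      hrelA, one_mul, TensorProduct.smul_tmul']
  have heq : D v * u + v * D u = p i j • (D u * v + u * D v) := by
    rw [← hLeibniz v u, hrel, map_smul, hLeibniz]
  set Ψ := skewPsi k n p C j with hΨ
  have hΨu : Ψ u = 0 := by
    rw [hu, hΨ, skewPsi_tmul, skewPsiA_X, map_one, mul_one, if_neg hne]
  have hΨv : Ψ v = DualNumber.eps := by
    rw [hv, hΨ, skewPsi_tmul, skewPsiA_X, map_one, mul_one, if_pos rfl]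
  have t1 : (Ψ (D v * u)).snd = 0 := by rw [map_mul, hΨu, mul_zero, TrivSqZeroExt.snd_zero]
  have t2 : (Ψ (v * D u)).snd = (Ψ (D u)).fst := by
    rw [map_mul, hΨv, TrivSqZeroExt.snd_mul]
    simp [MulOpposite.smul_eq_mul_unop]
  have t3 : (Ψ (D u * v)).snd = (Ψ (D u)).fst := by
    rw [map_mul, hΨv, TrivSqZeroExt.snd_mul]
    simp [MulOpposite.smul_eq_mul_unop]
  have t4 : (Ψ (u * D v)).snd = 0 := by rw [map_mul, hΨu, zero_mul, TrivSqZeroExt.snd_zero]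
  have key : (Ψ (D u)).fst = p i j • (Ψ (D u)).fst := by
    have h1 := congrArg (fun z => (Ψ z).snd) heq
    simp only [map_add, map_smul, TrivSqZeroExt.snd_add, TrivSqZeroExt.snd_smul] at h1
    rw [t1, t2, t3, t4, zero_add, add_zero] at h1
    exact h1
  rw [← fst_skewPsi k n p C j]
  have hsub : (algebraMap k C (p i j) - 1) * (Ψ (D u)).fst = 0 := by
    rw [sub_mul, one_mul, sub_eq_zero, ← Algebra.smul_def]
    exact key.symm
  rcases mul_eq_zero.mp hsub with h | h
  · exact absurd (hinj (by rw [map_one]; exact sub_eq_zero.mp h)) hj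
  · exact h
end
end

section
/- Let k be a field, q ∈ k^× with q ≠ 1, and let B = A_{q_1} ⊗ ⋯ ⊗ A_{q_m} be a tensor product of quantum Weyl algebras with all q_i ≠ 1. For every k-algebra automorphism g of B that is affine (g preserves the span Y ⊕ k where Y = span{x_i, y_i}), one has g(Y) = Y; that is, the constant terms of g(x_i) and g(y_i) vanish for all i. -/
noncomputable section

/-- Defining relations of `B = A_{q_1} ⊗ ⋯ ⊗ A_{q_m}`: the generator `(i, false)` is
`x_i`, the generator `(i, true)` is `y_i`; `y_i x_i = q_i x_i y_i + 1`, and generators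
with distinct indices commute. -/
def tWeylRel (k : Type*) [CommRing k] (m : ℕ) (q : Fin m → k) :
    FreeAlgebra k (Fin m × Bool) → FreeAlgebra k (Fin m × Bool) → Prop := fun a b =>
  (∃ i : Fin m, a = FreeAlgebra.ι k (i, true) * FreeAlgebra.ι k (i, false) ∧
      b = algebraMap k _ (q i) *
          (FreeAlgebra.ι k (i, false) * FreeAlgebra.ι k (i, true)) + 1) ∨
  (∃ u v : Fin m × Bool, u.1 ≠ v.1 ∧ a = FreeAlgebra.ι k u * FreeAlgebra.ι k v ∧
      b = FreeAlgebra.ι k v * FreeAlgebra.ι k u)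

/-- The tensor product `A_{q_1} ⊗ ⋯ ⊗ A_{q_m}` of quantum Weyl algebras, presented by
generators and relations. -/
abbrev TWeyl (k : Type*) [CommRing k] (m : ℕ) (q : Fin m → k) :=
  RingQuot (tWeylRel k m q)

/-- The generator `x_i` of `A_{q_1} ⊗ ⋯ ⊗ A_{q_m}`. -/
def TWeyl.x (k : Type*) [CommRing k] (m : ℕ) (q : Fin m → k) (i : Fin m) : TWeyl k m q :=
  RingQuot.mkAlgHom k (tWeylRel k m q) (FreeAlgebra.ι k (i, false))

/-- The generator `y_i` of `A_{q_1} ⊗ ⋯ ⊗ A_{q_m}`. -/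
def TWeyl.y (k : Type*) [CommRing k] (m : ℕ) (q : Fin m → k) (i : Fin m) : TWeyl k m q :=
  RingQuot.mkAlgHom k (tWeylRel k m q) (FreeAlgebra.ι k (i, true))

/-!
Since `q_i ≠ 1`, sending `x_i ↦ T_i` and `y_i ↦ (1 - q_i)⁻¹ T_i⁻¹` defines an algebra map from
`B` to the Laurent polynomial ring `k[T_1^{±1}, …, T_m^{±1}]`. The coefficients of the monomials
`T_i^{±1}` then give coordinates on `Y` that vanish on the constants and on all products of two
elements of `Y`, which land in total degree `0` or `±2`.

Write `g x_i = α + a` and `g y_i = β + b` with `a, b ∈ Y`. The `Y`-coordinates of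
`g y_i * g x_i = q_i g x_i * g y_i + 1` give `(1 - q_i) (β a + α b) = 0`, so
`g (α y_i + β x_i) = 2 α β` is a constant. As `g` is injective, `α y_i + β x_i = 2 α β`,
and the coordinates of `x_i` and `y_i` show `α = β = 0`.
-/

open Submodule Pointwise

section LinearCoordinates

variable {k A ι : Type*} [Field k] [Ring A] [Algebra k A]

structure IsLinearCoordinates (e : ι → A) (ψ : ι → A →ₗ[k] k) : Prop where
  apply_self : ∀ u, ψ u (e u) = 1
  apply_of_ne : ∀ u v, v ≠ u → ψ u (e v) = 0
  apply_one : ∀ u, ψ u 1 = 0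
  apply_mul : ∀ u, ∀ a ∈ span k (Set.range e), ∀ b ∈ span k (Set.range e), ψ u (a * b) = 0

namespace IsLinearCoordinates

variable {e : ι → A} {ψ : ι → A →ₗ[k] k}

theorem eq_zero_of_forall_apply_eq_zero (h : IsLinearCoordinates e ψ) {a : A}
    (ha : a ∈ span k (Set.range e)) (hψ : ∀ u, ψ u a = 0) : a = 0 := by
  obtain ⟨c, rfl⟩ := Finsupp.mem_span_range_iff_exists_finsupp.mp ha
  suffices c = 0 by simp [this]
  ext u
  have hsum : ψ u (c.sum fun v r => r • e v) = c u := by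
    rw [map_finsuppSum, Finsupp.sum_eq_single u
      (fun v _ hv => by rw [map_smul, h.apply_of_ne u v hv, smul_zero])
      (fun _ => by rw [zero_smul, map_zero]), map_smul, h.apply_self, smul_eq_mul, mul_one]
  rw [Finsupp.coe_zero, Pi.zero_apply, ← hsum, hψ u]

theorem smul_add_smul_eq_zero (h : IsLinearCoordinates e ψ) {q α β : k} (hq : q ≠ 1) {a b : A}
    (ha : a ∈ span k (Set.range e)) (hb : b ∈ span k (Set.range e))
    (hrel : (β • 1 + b) * (α • 1 + a) = q • ((α • 1 + a) * (β • 1 + b)) + 1) :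
    β • a + α • b = 0 := by
  refine h.eq_zero_of_forall_apply_eq_zero
    (add_mem (smul_mem _ _ ha) (smul_mem _ _ hb)) fun u => ?_
  have hu := congrArg (ψ u) hrel
  simp only [mul_add, add_mul, smul_mul_assoc, mul_smul_comm, one_mul, mul_one,
    map_add, map_smul, smul_eq_mul, h.apply_one, h.apply_mul u a ha b hb,
    h.apply_mul u b hb a ha] at hu
  have : (1 - q) * (β * ψ u a + α * ψ u b) = 0 := by linear_combination hu
  simpa [sub_eq_zero, hq.symm] using this

theorem algEquiv_const_eq_zero (h : IsLinearCoordinates e ψ) {s t : ι} (hst : s ≠ t) {q : k}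
    (hq : q ≠ 1) (hrel : e t * e s = q • (e s * e t) + 1) (g : A ≃ₐ[k] A) {α β : k} {a b : A}
    (ha : a ∈ span k (Set.range e)) (hb : b ∈ span k (Set.range e))
    (hgs : g (e s) = α • 1 + a) (hgt : g (e t) = β • 1 + b) :
    α = 0 ∧ β = 0 := by
  have hlin : β • a + α • b = 0 := h.smul_add_smul_eq_zero hq ha hb <| by
    simpa only [hgs, hgt, map_mul, map_add, map_smul, map_one] using congrArg g hrel
  have hconst : α • e t + β • e s = (2 * (α * β)) • 1 := g.injective <| by
    rw [map_add, map_smul, map_smul, hgs, hgt, map_smul, map_one]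
    linear_combination (norm := module) hlin
  constructor
  · simpa [h.apply_self, h.apply_of_ne t s hst, h.apply_one] using congrArg (ψ t) hconst
  · simpa [h.apply_self, h.apply_of_ne s t hst.symm, h.apply_one] using congrArg (ψ s) hconst

end IsLinearCoordinates

end LinearCoordinates

namespace TWeyl

variable {k : Type*} [Field k] {m : ℕ} {q : Fin m → k}

variable (k q) in
def gen (u : Fin m × Bool) : TWeyl k m q :=
  RingQuot.mkAlgHom k (tWeylRel k m q) (FreeAlgebra.ι k u)

theorem range_x_union_range_y :
    Set.range (x k m q) ∪ Set.range (y k m q) = Set.range (gen k q) := by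
  ext t
  constructor
  · rintro (⟨i, rfl⟩ | ⟨i, rfl⟩)
    exacts [⟨(i, false), rfl⟩, ⟨(i, true), rfl⟩]
  · rintro ⟨⟨i, _ | _⟩, rfl⟩
    exacts [Or.inl ⟨i, rfl⟩, Or.inr ⟨i, rfl⟩]

theorem y_mul_x (i : Fin m) : y k m q i * x k m q i = q i • (x k m q i * y k m q i) + 1 := by
  rw [Algebra.smul_def]
  simpa only [x, y, map_mul, map_add, map_one, AlgHom.commutes] using
    RingQuot.mkAlgHom_rel k (s := tWeylRel k m q) (Or.inl ⟨i, rfl, rfl⟩)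

def genExponent (u : Fin m × Bool) : Fin m →₀ ℤ :=
  Finsupp.single u.1 (if u.2 then -1 else 1)

theorem degree_genExponent (u : Fin m × Bool) :
    (genExponent u).degree = if u.2 then -1 else 1 :=
  Finsupp.degree_single _ _

theorem genExponent_injective : Function.Injective (genExponent (m := m)) := by
  rintro ⟨i, b⟩ ⟨j, c⟩ h
  obtain ⟨rfl, hbc⟩ | ⟨hb, -⟩ := Finsupp.single_eq_single_iff _ _ _ _ |>.mp h
  · cases b <;> cases c <;> simp_all
  · cases b <;> simp at hb

theorem genExponent_ne_zero (u : Fin m × Bool) : genExponent u ≠ 0 :=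
  Finsupp.single_ne_zero.mpr (by split_ifs <;> norm_num)

theorem genExponent_add_ne (u v w : Fin m × Bool) :
    genExponent u + genExponent v ≠ genExponent w := fun h => by
  have := congrArg Finsupp.degree h
  rw [map_add, degree_genExponent, degree_genExponent, degree_genExponent] at this
  split_ifs at this <;> omega

variable (q) in
def genScalar (u : Fin m × Bool) : k :=
  if u.2 then (1 - q u.1)⁻¹ else 1

theorem genScalar_ne_zero (hq : ∀ i, q i ≠ 1) (u : Fin m × Bool) : genScalar q u ≠ 0 := by
  unfold genScalar
  split_ifs
  · exact inv_ne_zero (sub_ne_zero.mpr (hq u.1).symm)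
  · exact one_ne_zero

theorem genScalar_mul_genScalar (hq : ∀ i, q i ≠ 1) (i : Fin m) :
    genScalar q (i, true) * genScalar q (i, false) =
      q i * (genScalar q (i, false) * genScalar q (i, true)) + 1 := by
  have : 1 - q i ≠ 0 := sub_ne_zero.mpr (hq i).symm
  simp only [genScalar, if_true, Bool.false_eq_true, if_false]
  field_simp
  ring

def toLaurent (hq : ∀ i, q i ≠ 1) : TWeyl k m q →ₐ[k] AddMonoidAlgebra k (Fin m →₀ ℤ) :=
  RingQuot.liftAlgHom k
    ⟨FreeAlgebra.lift k fun u => .single (genExponent u) (genScalar q u), by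
      rintro a b (⟨i, rfl, rfl⟩ | ⟨u, v, -, rfl, rfl⟩)
      · have hexp : genExponent (i, true) + genExponent (i, false) = 0 := by
          simp [genExponent]
        simp only [map_mul, map_add, map_one, FreeAlgebra.lift_ι_apply, AlgHom.commutes,
          AddMonoidAlgebra.single_mul_single, hexp, add_comm (genExponent (i, false))]
        rw [genScalar_mul_genScalar hq, AddMonoidAlgebra.single_add, ← AddMonoidAlgebra.one_def,
          AddMonoidAlgebra.coe_algebraMap, Function.comp_apply, Algebra.algebraMap_self,
          RingHom.id_apply, AddMonoidAlgebra.single_mul_single, zero_add]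
      · simp only [map_mul, FreeAlgebra.lift_ι_apply]
        exact mul_comm _ _⟩

theorem toLaurent_gen (hq : ∀ i, q i ≠ 1) (u : Fin m × Bool) :
    toLaurent hq (gen k q u) = .single (genExponent u) (genScalar q u) := by
  rw [gen, toLaurent, RingQuot.liftAlgHom_mkAlgHom_apply, FreeAlgebra.lift_ι_apply]

def linearCoord (hq : ∀ i, q i ≠ 1) (u : Fin m × Bool) : TWeyl k m q →ₗ[k] k :=
  (genScalar q u)⁻¹ •
    ((AddMonoidAlgebra.basis (Fin m →₀ ℤ) k).coord (genExponent u) ∘ₗ (toLaurent hq).toLinearMap)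

theorem linearCoord_apply (hq : ∀ i, q i ≠ 1) (u : Fin m × Bool) (a : TWeyl k m q) :
    linearCoord hq u a = (genScalar q u)⁻¹ * (toLaurent hq a).coeff (genExponent u) :=
  rfl

theorem isLinearCoordinates_linearCoord (hq : ∀ i, q i ≠ 1) :
    IsLinearCoordinates (gen k q) (linearCoord hq) where
  apply_self u := by
    rw [linearCoord_apply, toLaurent_gen, AddMonoidAlgebra.coeff_single, Finsupp.single_eq_same,
      inv_mul_cancel₀ (genScalar_ne_zero hq u)]
  apply_of_ne u v huv := by
    rw [linearCoord_apply, toLaurent_gen, AddMonoidAlgebra.coeff_single,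
      Finsupp.single_eq_of_ne' (genExponent_injective.ne huv), mul_zero]
  apply_one u := by
    rw [linearCoord_apply, map_one, AddMonoidAlgebra.one_def, AddMonoidAlgebra.coeff_single,
      Finsupp.single_eq_of_ne' (genExponent_ne_zero u).symm, mul_zero]
  apply_mul u a ha b hb := by
    have hab : a * b ∈ span k (Set.range (gen k q) * Set.range (gen k q)) :=
      span_mul_span k (Set.range (gen k q)) (Set.range (gen k q)) ▸ mul_mem_mul ha hb
    refine (span_le (p := LinearMap.ker (linearCoord hq u))).mpr ?_ hab
    rintro _ ⟨_, ⟨v, rfl⟩, _, ⟨w, rfl⟩, rfl⟩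
    rw [SetLike.mem_coe, LinearMap.mem_ker, linearCoord_apply, map_mul, toLaurent_gen,
      toLaurent_gen, AddMonoidAlgebra.single_mul_single, AddMonoidAlgebra.coeff_single,
      Finsupp.single_eq_of_ne' (genExponent_add_ne v w u), mul_zero]

end TWeyl

/-- Let `B = A_{q_1} ⊗ ⋯ ⊗ A_{q_m}` with all `q_i ≠ 1`.  For every
affine `k`-algebra automorphism `g` of `B` (one mapping each generator into
`Y ⊕ k` where `Y = span {x_i, y_i}`), one has `g(Y) = Y`: the images of the generators
lie in `Y`, i.e. the constant terms of `g x_i` and `g y_i` vanish. -/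
theorem affine_automorphism_preserves_Y
    (k : Type*) [Field k] (m : ℕ) (q : Fin m → k) (hq : ∀ i, q i ≠ 1)
    (g : TWeyl k m q ≃ₐ[k] TWeyl k m q)
    (haff : ∀ i : Fin m,
      g (TWeyl.x k m q i) ∈ Submodule.span k
        (insert (1 : TWeyl k m q) (Set.range (TWeyl.x k m q) ∪ Set.range (TWeyl.y k m q))) ∧
      g (TWeyl.y k m q i) ∈ Submodule.span k
        (insert (1 : TWeyl k m q) (Set.range (TWeyl.x k m q) ∪ Set.range (TWeyl.y k m q)))) :
    ∀ i : Fin m,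
      g (TWeyl.x k m q i) ∈ Submodule.span k
        (Set.range (TWeyl.x k m q) ∪ Set.range (TWeyl.y k m q)) ∧
      g (TWeyl.y k m q i) ∈ Submodule.span k
        (Set.range (TWeyl.x k m q) ∪ Set.range (TWeyl.y k m q)) := by
  intro i
  obtain ⟨hx, hy⟩ := haff i
  rw [TWeyl.range_x_union_range_y, mem_span_insert] at hx hy
  rw [TWeyl.range_x_union_range_y]
  obtain ⟨α, a, ha, hgx⟩ := hx
  obtain ⟨β, b, hb, hgy⟩ := hy
  obtain ⟨rfl, rfl⟩ := (TWeyl.isLinearCoordinates_linearCoord hq).algEquiv_const_eq_zero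
    (s := (i, false)) (t := (i, true)) (by simp) (hq i) (TWeyl.y_mul_x i) g ha hb hgx hgy
  rw [hgx, hgy, zero_smul, zero_add, zero_add]
  exact ⟨ha, hb⟩
end
end

section
/- Let k be a field and B = A_{q_1} ⊗ ⋯ ⊗ A_{q_m} with q_i ≠ 1 for all i, and suppose additionally q_i ≠ q_j^{−1} (that is, q_i q_j ≠ 1) for all i, j. Then every affine automorphism g of B (one with g(x_i), g(y_i) ∈ span{1, x_1,…,x_m, y_1,…,y_m} and zero constant terms) has the form: there is a permutation σ ∈ S_m and scalars b_i ∈ k^× with g(x_i) = b_i x_{σ(i)}, g(y_i) = b_i^{−1} y_{σ(i)}, and moreover q_i = q_{σ(i)} for all i. -/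
noncomputable section

namespace TWAux

open MvPolynomial

variable {k : Type*} [Field k] {m : ℕ}

/-- q-integer `1 + w + ⋯ + w^(n-1)`. -/
def qInt (w : k) : ℕ → k
  | 0 => 0
  | n + 1 => 1 + w * qInt w n

@[simp] lemma qInt_zero (w : k) : qInt w 0 = 0 := rfl
@[simp] lemma qInt_one (w : k) : qInt w 1 = 1 := by simp [qInt]
@[simp] lemma qInt_two (w : k) : qInt w 2 = 1 + w := by simp [qInt]
lemma qInt_succ (w : k) (n : ℕ) : qInt w (n + 1) = 1 + w * qInt w n := rfl

lemma X_eq_monomial (i : Fin m) :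
    (MvPolynomial.X i : MvPolynomial (Fin m) k) = monomial (Finsupp.single i 1) 1 := rfl

/-- the `q`-derivative in variable `i` as a linear endomorphism of the polynomial ring. -/
def qD (w : k) (i : Fin m) : Module.End k (MvPolynomial (Fin m) k) :=
  (MvPolynomial.basisMonomials (Fin m) k).constr k fun d =>
    qInt w (d i) • monomial (d - Finsupp.single i 1) 1

lemma qD_monomial (w : k) (i : Fin m) (d : Fin m →₀ ℕ) :
    qD w i (monomial d 1) = qInt w (d i) • monomial (d - Finsupp.single i 1) 1 := by
  have := (MvPolynomial.basisMonomials (Fin m) k).constr_basis k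
    (fun d => qInt w (d i) • (monomial (d - Finsupp.single i 1) (1:k))) d
  rwa [MvPolynomial.coe_basisMonomials] at this

/-- multiplication by `X i` as a linear endomorphism. -/
def Mx (i : Fin m) : Module.End k (MvPolynomial (Fin m) k) :=
  LinearMap.mulLeft k (MvPolynomial.X i)

@[simp] lemma Mx_apply (i : Fin m) (p : MvPolynomial (Fin m) k) :
    Mx i p = MvPolynomial.X i * p := rfl

@[simp] lemma qD_one (w : k) (i : Fin m) : qD w i (1 : MvPolynomial (Fin m) k) = 0 := by
  have h1 : (1 : MvPolynomial (Fin m) k) = monomial 0 1 := by simp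
  rw [h1, qD_monomial]; simp

@[simp] lemma qD_X (w : k) (i r : Fin m) :
    qD w i (MvPolynomial.X r) = if i = r then 1 else 0 := by
  rw [X_eq_monomial, qD_monomial]
  rcases eq_or_ne i r with h | h
  · subst h; simp
  · simp [Finsupp.single_apply, (Ne.symm h), h]

lemma R1 (w : k) (i : Fin m) :
    qD w i * Mx i = w • (Mx i * qD w i) + 1 := by
  apply (MvPolynomial.basisMonomials (Fin m) k).ext
  intro d
  rw [MvPolynomial.coe_basisMonomials]
  have hXm : (MvPolynomial.X i : MvPolynomial (Fin m) k) * monomial d 1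
      = monomial (Finsupp.single i 1 + d) 1 := by
    rw [X_eq_monomial, monomial_mul, one_mul]
  simp only [Module.End.mul_apply, LinearMap.add_apply, LinearMap.smul_apply,
    Module.End.one_apply, Mx_apply, hXm, qD_monomial]
  rcases Nat.eq_zero_or_pos (d i) with h0 | hpos
  · simp [Finsupp.add_apply, Finsupp.single_apply, h0, qInt_succ, add_tsub_cancel_left]
  · have hle : Finsupp.single i 1 ≤ d := by
      rw [Finsupp.single_le_iff]; omega
    have h1 : ((Finsupp.single i 1 + d : Fin m →₀ ℕ)) i = d i + 1 := by
      rw [Finsupp.add_apply, Finsupp.single_eq_same]; omega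
    have h2 : Finsupp.single i 1 + d - Finsupp.single i 1 = d := add_tsub_cancel_left _ _
    have h3 : Finsupp.single i 1 + (d - Finsupp.single i 1) = d := by
      rw [add_comm, tsub_add_cancel_of_le hle]
    have hXm2 : (MvPolynomial.X i : MvPolynomial (Fin m) k) *
        monomial (d - Finsupp.single i 1) 1 = monomial d 1 := by
      rw [X_eq_monomial, monomial_mul, one_mul, h3]
    rw [h1, h2, mul_smul_comm, hXm2, qInt_succ, add_smul, one_smul, smul_smul, add_comm]

lemma R2 (i j : Fin m) :
    (Mx i : Module.End k (MvPolynomial (Fin m) k)) * Mx j = Mx j * Mx i := by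
  apply LinearMap.ext; intro p
  simp only [Module.End.mul_apply, Mx_apply]
  ring

lemma R3 {i j : Fin m} (hij : i ≠ j) (w : k) :
    qD w i * Mx j = Mx j * qD w i := by
  apply (MvPolynomial.basisMonomials (Fin m) k).ext
  intro d
  rw [MvPolynomial.coe_basisMonomials]
  have hXm : (MvPolynomial.X j : MvPolynomial (Fin m) k) * monomial d 1
      = monomial (Finsupp.single j 1 + d) 1 := by
    rw [X_eq_monomial, monomial_mul, one_mul]
  simp only [Module.End.mul_apply, Mx_apply, hXm, qD_monomial]
  have h1 : ((Finsupp.single j 1 + d : Fin m →₀ ℕ)) i = d i := by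
    rw [Finsupp.add_apply, Finsupp.single_eq_of_ne' hij.symm, zero_add]
  rw [h1]
  rcases Nat.eq_zero_or_pos (d i) with h0 | hpos
  · simp [h0, qInt]
  · have hle : Finsupp.single i 1 ≤ d := by rw [Finsupp.single_le_iff]; omega
    have h2 : Finsupp.single j 1 + d - Finsupp.single i 1
        = Finsupp.single j 1 + (d - Finsupp.single i 1) := add_tsub_assoc_of_le hle _
    rw [h2, mul_smul_comm, X_eq_monomial, monomial_mul, one_mul]

lemma R4 {i j : Fin m} (hij : i ≠ j) (w w' : k) :
    qD w i * qD w' j = qD w' j * qD w i := by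
  apply (MvPolynomial.basisMonomials (Fin m) k).ext
  intro d
  rw [MvPolynomial.coe_basisMonomials]
  simp only [Module.End.mul_apply, qD_monomial, map_smul, qD_monomial, smul_smul]
  have hji : ((d - Finsupp.single j 1 : Fin m →₀ ℕ)) i = d i := by
    rw [Finsupp.tsub_apply, Finsupp.single_eq_of_ne' hij.symm]; rfl
  have hij' : ((d - Finsupp.single i 1 : Fin m →₀ ℕ)) j = d j := by
    rw [Finsupp.tsub_apply, Finsupp.single_eq_of_ne' hij]; rfl
  rw [hji, hij', mul_comm, tsub_tsub, tsub_tsub, add_comm (Finsupp.single j 1)]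

/-- `qD` on a product of two variables. -/
lemma qD_X_mul_X (w : k) (j l r : Fin m) :
    qD w j (MvPolynomial.X l * MvPolynomial.X r) =
      if j = l then (if l = r then (1 + w) • MvPolynomial.X r else MvPolynomial.X r)
      else if j = r then MvPolynomial.X l else 0 := by
  have h : (MvPolynomial.X l : MvPolynomial (Fin m) k) * MvPolynomial.X r
      = monomial (Finsupp.single l 1 + Finsupp.single r 1) 1 := by
    rw [X_eq_monomial, X_eq_monomial, monomial_mul, one_mul]
  rw [h, qD_monomial]
  have happ : ((Finsupp.single l 1 + Finsupp.single r 1 : Fin m →₀ ℕ)) j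
      = (if l = j then 1 else 0) + (if r = j then 1 else 0) := by
    rw [Finsupp.add_apply, Finsupp.single_apply, Finsupp.single_apply]
  by_cases hjl : j = l
  · subst hjl
    by_cases hlr : j = r
    · subst hlr
      rw [happ]
      simp only [if_pos rfl]
      rw [add_tsub_cancel_left]
      norm_num [X_eq_monomial]
    · rw [happ, if_pos rfl, if_neg (fun h => hlr h.symm), add_tsub_cancel_left]
      simp [if_neg hlr, X_eq_monomial]
  · by_cases hjr : j = r
    · subst hjr
      rw [happ, if_neg (fun h => hjl h.symm), if_pos rfl, add_tsub_cancel_right]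
      simp [if_neg hjl, if_neg (fun h : j = l => hjl h), X_eq_monomial]
    · rw [happ, if_neg (fun h => hjl h.symm), if_neg (fun h => hjr h.symm)]
      simp [if_neg hjl, if_neg hjr]

section Rep
variable (q : Fin m → k)

/-- operators representing the generators. -/
def op1 : Fin m × Bool → Module.End k (MvPolynomial (Fin m) k) :=
  fun p => if p.2 then qD (q p.1) p.1 else Mx p.1

lemma op1_respects : ∀ ⦃a b : FreeAlgebra k (Fin m × Bool)⦄, tWeylRel k m q a b →
    FreeAlgebra.lift k (op1 q) a = FreeAlgebra.lift k (op1 q) b := by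
  intro a b hab
  rcases hab with ⟨i, ha, hb⟩ | ⟨u, v, huv, ha, hb⟩
  · subst ha; subst hb
    simp only [map_mul, map_add, map_one, FreeAlgebra.lift_ι_apply, AlgHom.commutes]
    show qD (q i) i * Mx i = algebraMap k _ (q i) * (Mx i * qD (q i) i) + 1
    rw [Algebra.algebraMap_eq_smul_one, smul_mul_assoc, one_mul, R1]
  · subst ha; subst hb
    simp only [map_mul, FreeAlgebra.lift_ι_apply]
    show op1 q u * op1 q v = op1 q v * op1 q u
    obtain ⟨i, bi⟩ := u
    obtain ⟨j, bj⟩ := v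
    have hij : i ≠ j := huv
    cases bi <;> cases bj <;> simp only [op1, Bool.cond_eq_ite, if_true, if_false]
    · exact R2 i j
    · exact (R3 hij.symm (q j)).symm
    · exact R3 hij (q i)
    · exact R4 hij (q i) (q j)

/-- The polynomial representation of `TWeyl`. -/
def rep1 : TWeyl k m q →ₐ[k] Module.End k (MvPolynomial (Fin m) k) :=
  RingQuot.liftAlgHom k ⟨FreeAlgebra.lift k (op1 q), op1_respects q⟩

@[simp] lemma rep1_x (j : Fin m) : rep1 q (TWeyl.x k m q j) = Mx j := by
  rw [TWeyl.x, rep1, RingQuot.liftAlgHom_mkAlgHom_apply, FreeAlgebra.lift_ι_apply]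
  rfl

@[simp] lemma rep1_y (j : Fin m) : rep1 q (TWeyl.y k m q j) = qD (q j) j := by
  rw [TWeyl.y, rep1, RingQuot.liftAlgHom_mkAlgHom_apply, FreeAlgebra.lift_ι_apply]
  rfl

end Rep

section Ops
variable (q : Fin m → k)

/-- the linear polynomial with coefficients `a`. -/
def Pa (a : Fin m → k) : MvPolynomial (Fin m) k := ∑ j, a j • MvPolynomial.X j

/-- the "lowering" part of an affine operator. -/
def Lop (c : Fin m → k) : Module.End k (MvPolynomial (Fin m) k) :=
  ∑ j, c j • qD (q j) j

/-- a general affine operator. -/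
def Top (a c : Fin m → k) : Module.End k (MvPolynomial (Fin m) k) :=
  (∑ j, a j • Mx j) + Lop q c

lemma Lop_apply (c : Fin m → k) (p : MvPolynomial (Fin m) k) :
    Lop q c p = ∑ j, c j • qD (q j) j p := by
  simp [Lop, LinearMap.sum_apply]

lemma Top_apply (a c : Fin m → k) (p : MvPolynomial (Fin m) k) :
    Top q a c p = Pa a * p + Lop q c p := by
  simp only [Top, LinearMap.add_apply, LinearMap.sum_apply, LinearMap.smul_apply, Mx_apply,
    Pa, Finset.sum_mul, smul_mul_assoc]

@[simp] lemma Lop_one (c : Fin m → k) : Lop q c (1 : MvPolynomial (Fin m) k) = 0 := by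
  simp [Lop_apply]

@[simp] lemma Lop_X (c : Fin m → k) (r : Fin m) :
    Lop q c (MvPolynomial.X r) = c r • 1 := by
  rw [Lop_apply]
  rw [Finset.sum_eq_single r]
  · simp
  · intro j _ hj; simp [qD_X, hj]
  · simp

lemma Lop_Pa (c a : Fin m → k) : Lop q c (Pa a) = (∑ j, a j * c j) • 1 := by
  rw [Pa, map_sum]
  simp only [map_smul, Lop_X, smul_smul]
  rw [Finset.sum_smul]

lemma constantCoeff_Pa (a : Fin m → k) : constantCoeff (Pa a) = 0 := by
  simp [Pa, map_sum, MvPolynomial.smul_eq_C_mul]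

lemma coeff_single_X (s t : Fin m) :
    MvPolynomial.coeff (Finsupp.single t 1) (MvPolynomial.X s : MvPolynomial (Fin m) k)
      = if s = t then 1 else 0 := by
  rw [X_eq_monomial, coeff_monomial]
  congr 1
  simp only [eq_iff_iff]
  exact ⟨fun h => by
    have := Finsupp.single_left_injective (one_ne_zero (α := ℕ)) h; exact this,
    fun h => by rw [h]⟩

lemma coeff_single_Pa (a : Fin m → k) (t : Fin m) :
    MvPolynomial.coeff (Finsupp.single t 1) (Pa a) = a t := by
  rw [Pa, MvPolynomial.coeff_sum]
  rw [Finset.sum_eq_single t]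
  · simp [coeff_single_X]
  · intro j _ hj
    simp [MvPolynomial.coeff_smul, coeff_single_X, hj]
  · simp

lemma Pa_eq_zero {a : Fin m → k} (h : Pa a = 0) : a = 0 := by
  funext t
  have := coeff_single_Pa a t
  rw [h] at this
  simpa using this.symm

/-- constant coefficient of a `q`-derivative. -/
lemma constantCoeff_qD (w : k) (j : Fin m) (p : MvPolynomial (Fin m) k) :
    MvPolynomial.coeff 0 (qD w j p) = MvPolynomial.coeff (Finsupp.single j 1) p := by
  have : (MvPolynomial.lcoeff k 0).comp (qD w j) = MvPolynomial.lcoeff k (Finsupp.single j 1) := by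
    apply (MvPolynomial.basisMonomials (Fin m) k).ext
    intro d
    rw [MvPolynomial.coe_basisMonomials]
    simp only [LinearMap.comp_apply, MvPolynomial.lcoeff_apply, qD_monomial,
      MvPolynomial.coeff_smul, coeff_monomial, smul_eq_mul]
    by_cases hd : d = Finsupp.single j 1
    · subst hd; simp
    · rw [if_neg hd]
      rcases Nat.eq_zero_or_pos (d j) with h0 | hpos
      · simp [h0]
      · have hne : d - Finsupp.single j 1 ≠ 0 := by
          intro hsub
          apply hd
          have hle : d ≤ Finsupp.single j 1 := tsub_eq_zero_iff_le.mp hsub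
          ext t
          rcases eq_or_ne t j with rfl | ht
          · have := Finsupp.le_def.mp hle t
            simp only [Finsupp.single_eq_same] at this ⊢
            omega
          · have := Finsupp.le_def.mp hle t
            simp only [Finsupp.single_eq_of_ne' (Ne.symm ht)] at this ⊢
            omega
        simp [if_neg hne]
  exact LinearMap.congr_fun this p

lemma isHomogeneous_Pa (a : Fin m → k) : (Pa a).IsHomogeneous 1 := by
  apply MvPolynomial.IsHomogeneous.sum
  intro j _
  rw [MvPolynomial.smul_eq_C_mul]
  exact (MvPolynomial.isHomogeneous_X k j).C_mul (a j)

end Ops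

section Keys
variable (q : Fin m → k)

lemma degree_single_one (t : Fin m) : (Finsupp.single t 1 : Fin m →₀ ℕ).degree = 1 := by
  exact Finsupp.degree_single t 1

lemma single_add_single_ne_zero (l r : Fin m) :
    (Finsupp.single l 1 + Finsupp.single r 1 : Fin m →₀ ℕ) ≠ 0 := by
  intro h
  have := DFunLike.congr_fun h l
  simp [Finsupp.add_apply, Finsupp.single_apply] at this

lemma coeff_single_of_isHomogeneous {p : MvPolynomial (Fin m) k} {n : ℕ}
    (hp : p.IsHomogeneous n) (hn : n ≠ 1) (t : Fin m) :
    MvPolynomial.coeff (Finsupp.single t 1) p = 0 :=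
  hp.coeff_eq_zero (by rw [degree_single_one]; exact fun h => hn h.symm)

lemma constantCoeff_Lop (c : Fin m → k) (v : MvPolynomial (Fin m) k) :
    MvPolynomial.coeff 0 (Lop q c v) = ∑ j, c j * MvPolynomial.coeff (Finsupp.single j 1) v := by
  rw [Lop_apply, MvPolynomial.coeff_sum]
  refine Finset.sum_congr rfl fun j _ => ?_
  rw [MvPolynomial.coeff_smul, constantCoeff_qD, smul_eq_mul]

lemma isHomogeneous_Pa_mul_X (a : Fin m → k) (r : Fin m) :
    (Pa a * MvPolynomial.X r : MvPolynomial (Fin m) k).IsHomogeneous 2 :=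
  (isHomogeneous_Pa a).mul (MvPolynomial.isHomogeneous_X k r)

lemma isHomogeneous_Pa_mul_Pa_mul_X (a b : Fin m → k) (r : Fin m) :
    (Pa a * (Pa b * MvPolynomial.X r) : MvPolynomial (Fin m) k).IsHomogeneous 3 :=
  (isHomogeneous_Pa a).mul (isHomogeneous_Pa_mul_X b r)

lemma Lop_XX_ne {l r : Fin m} (h : l ≠ r) (c : Fin m → k) :
    Lop q c (MvPolynomial.X l * MvPolynomial.X r)
      = c l • MvPolynomial.X r + c r • MvPolynomial.X l := by
  rw [Lop_apply]
  have hs : ∀ j : Fin m, c j • qD (q j) j (MvPolynomial.X l * MvPolynomial.X r)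
      = (if j = l then c j • MvPolynomial.X r else 0)
        + (if j = r then c j • MvPolynomial.X l else 0) := by
    intro j
    rw [qD_X_mul_X]
    by_cases hjl : j = l
    · subst hjl
      rw [if_pos rfl, if_neg h, if_pos rfl, if_neg (fun hjr => h hjr)]
      rw [add_zero]
    · rw [if_neg hjl, if_neg hjl]
      by_cases hjr : j = r
      · rw [if_pos hjr, if_pos hjr, zero_add]
      · rw [if_neg hjr, if_neg hjr, smul_zero, add_zero]
  rw [Finset.sum_congr rfl fun j _ => hs j, Finset.sum_add_distrib]
  rw [Finset.sum_ite_eq' Finset.univ l (fun j => c j • MvPolynomial.X r),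
    Finset.sum_ite_eq' Finset.univ r (fun j => c j • MvPolynomial.X l)]
  simp

lemma Lop_XX_eq (c : Fin m → k) (r : Fin m) :
    Lop q c (MvPolynomial.X r * MvPolynomial.X r)
      = ((1 + q r) * c r) • MvPolynomial.X r := by
  rw [Lop_apply, Finset.sum_eq_single r]
  · rw [qD_X_mul_X, if_pos rfl, if_pos rfl, smul_smul, mul_comm]
  · intro j _ hj
    rw [qD_X_mul_X, if_neg hj, if_neg hj, smul_zero]
  · simp

/-- coefficient of `X t` in `Lop c (Pa a * X r)`. -/
lemma coeff_Lop_Pa_mul_X (c a : Fin m → k) (r t : Fin m) :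
    MvPolynomial.coeff (Finsupp.single t 1) (Lop q c (Pa a * MvPolynomial.X r))
      = if t = r then (∑ l, a l * c l) + q r * (a r * c r) else a t * c r := by
  have hPX : Pa a * MvPolynomial.X r
      = ∑ l, a l • (MvPolynomial.X l * MvPolynomial.X r) := by
    rw [Pa, Finset.sum_mul]
    exact Finset.sum_congr rfl fun l _ => smul_mul_assoc (a l) _ _
  rw [hPX, map_sum, MvPolynomial.coeff_sum]
  by_cases htr : t = r
  · subst htr
    rw [if_pos rfl]
    have hs : ∀ l ∈ Finset.univ, MvPolynomial.coeff (Finsupp.single t 1)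
        (Lop q c (a l • (MvPolynomial.X l * MvPolynomial.X t)))
        = a l * c l + (if l = t then q t * (a t * c t) else 0) := by
      intro l _
      rw [map_smul, MvPolynomial.coeff_smul, smul_eq_mul]
      by_cases hlt : l = t
      · subst hlt
        rw [Lop_XX_eq, MvPolynomial.coeff_smul, coeff_single_X, if_pos rfl, if_pos rfl,
          smul_eq_mul]
        ring
      · rw [Lop_XX_ne q hlt, MvPolynomial.coeff_add, MvPolynomial.coeff_smul,
          MvPolynomial.coeff_smul, coeff_single_X, coeff_single_X, if_pos rfl, if_neg hlt,
          if_neg hlt, smul_eq_mul, smul_eq_mul]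
        ring
    rw [Finset.sum_congr rfl hs, Finset.sum_add_distrib,
      Finset.sum_ite_eq' Finset.univ t (fun _ => q t * (a t * c t))]
    simp
  · rw [if_neg htr]
    have hs : ∀ l ∈ Finset.univ, MvPolynomial.coeff (Finsupp.single t 1)
        (Lop q c (a l • (MvPolynomial.X l * MvPolynomial.X r)))
        = if l = t then a t * c r else 0 := by
      intro l _
      rw [map_smul, MvPolynomial.coeff_smul, smul_eq_mul]
      by_cases hlr : l = r
      · subst hlr
        rw [Lop_XX_eq, MvPolynomial.coeff_smul, coeff_single_X,
          if_neg (fun h : l = t => htr h.symm),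
          if_neg (fun h : l = t => htr h.symm)]
        simp
      · rw [Lop_XX_ne q hlr, MvPolynomial.coeff_add, MvPolynomial.coeff_smul,
          MvPolynomial.coeff_smul, coeff_single_X, coeff_single_X,
          if_neg (fun h : r = t => htr h.symm)]
        by_cases hlt : l = t
        · subst hlt
          rw [if_pos rfl, if_pos rfl]
          simp [mul_comm]
        · rw [if_neg hlt, if_neg hlt]
          simp
    rw [Finset.sum_congr rfl hs, Finset.sum_ite_eq' Finset.univ t (fun _ => a t * c r)]
    simp

end Keys

section Extract
variable (q : Fin m → k) (i : Fin m) (a c a' c' : Fin m → k)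

/-- The operator relation satisfied by the images of `x i`, `y i`. -/
def OpRel : Prop :=
  Top q a' c' * Top q a c
    = q i • (Top q a c * Top q a' c') + (1 : Module.End k (MvPolynomial (Fin m) k))

variable {q i a c a' c'}

lemma opRel_apply (H : OpRel q i a c a' c') (p : MvPolynomial (Fin m) k) :
    Top q a' c' (Top q a c p) = q i • (Top q a c (Top q a' c' p)) + p := by
  have := LinearMap.congr_fun H p
  simpa only [Module.End.mul_apply, LinearMap.add_apply, LinearMap.smul_apply,
    Module.End.one_apply] using this

/-- the polynomial identity obtained by applying the relation to `1`. -/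
lemma E_one (H : OpRel q i a c a' c') :
    Pa a' * Pa a + (∑ j, a j * c' j) • (1 : MvPolynomial (Fin m) k)
      = q i • (Pa a * Pa a' + (∑ j, a' j * c j) • 1) + 1 := by
  have h := opRel_apply H 1
  simp only [Top_apply, mul_one, Lop_one, add_zero, Lop_Pa] at h
  exact h

lemma key0 (H : OpRel q i a c a' c') :
    (∑ j, a j * c' j) = q i * (∑ j, a' j * c j) + 1 := by
  have h := congrArg (MvPolynomial.coeff 0) (E_one H)
  simp only [MvPolynomial.coeff_add, MvPolynomial.coeff_smul, smul_eq_mul] at h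
  have h0 : ∀ b b' : Fin m → k, MvPolynomial.coeff 0 (Pa b * Pa b') = 0 := by
    intro b b'
    have : MvPolynomial.constantCoeff (Pa b * Pa b') = 0 := by
      rw [map_mul, constantCoeff_Pa, zero_mul]
    exact this
  rw [h0, h0] at h
  simpa using h

lemma keyXdichot (hq1 : q i ≠ 1) (H : OpRel q i a c a' c') : a = 0 ∨ a' = 0 := by
  have h := E_one H
  have hk := key0 H
  have h2 : (MvPolynomial.C (q i) - 1) * (Pa a * Pa a') = 0 := by
    have hC : ((∑ j, a j * c' j) • (1 : MvPolynomial (Fin m) k))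
        = MvPolynomial.C (q i) * ((∑ j, a' j * c j) • 1) + 1 := by
      rw [MvPolynomial.smul_eq_C_mul, MvPolynomial.smul_eq_C_mul, hk]
      push_cast [map_add, map_mul, map_one]
      ring
    simp only [MvPolynomial.smul_eq_C_mul] at h hC
    linear_combination hC - h
  have h3 : (MvPolynomial.C (q i) - 1 : MvPolynomial (Fin m) k) ≠ 0 := by
    intro hc
    apply hq1
    have : MvPolynomial.C (q i) = (MvPolynomial.C 1 : MvPolynomial (Fin m) k) := by
      rw [map_one]; linear_combination hc
    exact MvPolynomial.C_injective _ _ this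
  rcases mul_eq_zero.mp h2 with hc | hc
  · exact absurd hc h3
  · rcases mul_eq_zero.mp hc with hc' | hc'
    · exact Or.inl (Pa_eq_zero hc')
    · exact Or.inr (Pa_eq_zero hc')

/-- the scalar identity from the constant coefficient of the relation applied to `X l * X r`. -/
lemma keyYY (H : OpRel q i a c a' c') (l r : Fin m) :
    MvPolynomial.coeff 0 (Lop q c' (Lop q c (MvPolynomial.X l * MvPolynomial.X r)))
      = q i * MvPolynomial.coeff 0 (Lop q c (Lop q c' (MvPolynomial.X l * MvPolynomial.X r))) := by
  have h := congrArg (MvPolynomial.coeff 0) (opRel_apply H (MvPolynomial.X l * MvPolynomial.X r))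
  simp only [Top_apply, mul_add, map_add, MvPolynomial.coeff_add, MvPolynomial.coeff_smul,
    smul_eq_mul] at h
  have hconst : ∀ b : Fin m → k, ∀ p : MvPolynomial (Fin m) k,
      MvPolynomial.coeff 0 (Pa b * p) = 0 := by
    intro b p
    have : MvPolynomial.constantCoeff (Pa b * p) = 0 := by
      rw [map_mul, constantCoeff_Pa, zero_mul]
    exact this
  have hhom : ∀ b b' : Fin m → k,
      MvPolynomial.coeff 0 (Lop q b' (Pa b * (MvPolynomial.X l * MvPolynomial.X r))) = 0 := by
    intro b b'
    rw [constantCoeff_Lop]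
    refine Finset.sum_eq_zero fun j _ => ?_
    rw [coeff_single_of_isHomogeneous
      ((isHomogeneous_Pa b).mul (((MvPolynomial.isHomogeneous_X k l).mul
        (MvPolynomial.isHomogeneous_X k r)))) (by norm_num) j, mul_zero]
  have hXX0 : MvPolynomial.coeff 0 (MvPolynomial.X l * MvPolynomial.X r
      : MvPolynomial (Fin m) k) = 0 := by
    have : (MvPolynomial.X l : MvPolynomial (Fin m) k) * MvPolynomial.X r
        = monomial (Finsupp.single l 1 + Finsupp.single r 1) 1 := by
      rw [X_eq_monomial, X_eq_monomial, monomial_mul, one_mul]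
    rw [this, MvPolynomial.coeff_monomial, if_neg (single_add_single_ne_zero l r)]
  simp only [hconst, hhom, hXX0] at h
  simpa using h

lemma keyYYd (hq1 : q i ≠ 1) (hqr : ∀ r, q r * q r ≠ 1) (H : OpRel q i a c a' c') (r : Fin m) :
    c r * c' r = 0 := by
  have h := keyYY H r r
  rw [Lop_XX_eq, map_smul, Lop_X, Lop_XX_eq, map_smul, Lop_X] at h
  simp only [smul_smul, MvPolynomial.coeff_smul, smul_eq_mul] at h
  have h1 : MvPolynomial.coeff 0 (1 : MvPolynomial (Fin m) k) = 1 := by simp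
  rw [h1] at h
  have h2 : (1 - q i) * ((1 + q r) * (c r * c' r)) = 0 := by linear_combination h
  have hqr' : (1 : k) + q r ≠ 0 := by
    intro h0
    apply hqr r
    have hneg : q r = -1 := by linear_combination h0
    rw [hneg]; ring
  rcases mul_eq_zero.mp h2 with h3 | h3
  · exact absurd (sub_eq_zero.mp h3).symm hq1
  · rcases mul_eq_zero.mp h3 with h4 | h4
    · exact absurd h4 hqr'
    · exact h4

lemma keyYYo (hq1 : q i ≠ 1) (H : OpRel q i a c a' c') {l r : Fin m} (hlr : l ≠ r) :
    c l * c' r + c r * c' l = 0 := by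
  have h := keyYY H l r
  rw [Lop_XX_ne q hlr, Lop_XX_ne q hlr, map_add, map_add, map_smul, map_smul, map_smul,
    map_smul, Lop_X, Lop_X, Lop_X, Lop_X] at h
  simp only [MvPolynomial.coeff_add, MvPolynomial.coeff_smul, smul_eq_mul] at h
  have h1 : MvPolynomial.coeff 0 (1 : MvPolynomial (Fin m) k) = 1 := by simp
  rw [h1] at h
  have h2 : (1 - q i) * (c l * c' r + c r * c' l) = 0 := by linear_combination h
  rcases mul_eq_zero.mp h2 with h3 | h3
  · exact absurd (sub_eq_zero.mp h3).symm hq1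
  · exact h3

lemma keyYdichot (hq1 : q i ≠ 1) (hqr : ∀ r, q r * q r ≠ 1) (H : OpRel q i a c a' c') :
    c = 0 ∨ c' = 0 := by
  by_contra hnot
  push_neg at hnot
  obtain ⟨h1, h2⟩ := hnot
  obtain ⟨r, hr⟩ := Function.ne_iff.mp h1
  obtain ⟨t, ht⟩ := Function.ne_iff.mp h2
  simp only [Pi.zero_apply] at hr ht
  rcases eq_or_ne r t with rfl | hrt
  · exact hr (by
      have := keyYYd hq1 hqr H r
      rcases mul_eq_zero.mp this with h | h
      · exact h
      · exact absurd h ht)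
  · have hct : c t = 0 := by
      have := keyYYd hq1 hqr H t
      rcases mul_eq_zero.mp this with h | h
      · exact h
      · exact absurd h ht
    have := keyYYo hq1 H hrt
    rw [hct, zero_mul, add_zero] at this
    rcases mul_eq_zero.mp this with h | h
    · exact hr h
    · exact ht h

lemma keyX (H : OpRel q i a c a' c') (r t : Fin m) :
    c r * a' t + (if t = r then (∑ l, a l * c' l) + q r * (a r * c' r) else a t * c' r)
      = q i * (c' r * a t
          + (if t = r then (∑ l, a' l * c l) + q r * (a' r * c r) else a' t * c r))
        + (if r = t then 1 else 0) := by
  have h := congrArg (MvPolynomial.coeff (Finsupp.single t 1)) (opRel_apply H (MvPolynomial.X r))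
  simp only [Top_apply, Lop_X, mul_add, map_add, map_smul, Lop_one, smul_zero, add_zero,
    mul_smul_comm, mul_one, MvPolynomial.coeff_add, MvPolynomial.coeff_smul, smul_eq_mul] at h
  rw [coeff_single_of_isHomogeneous (isHomogeneous_Pa_mul_Pa_mul_X a' a r) (by norm_num) t,
    coeff_single_of_isHomogeneous (isHomogeneous_Pa_mul_Pa_mul_X a a' r) (by norm_num) t,
    coeff_Lop_Pa_mul_X, coeff_Lop_Pa_mul_X, coeff_single_Pa, coeff_single_Pa,
    coeff_single_X] at h
  rcases eq_or_ne t r with rfl | htr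
  · simp only [if_pos rfl] at h ⊢
    linear_combination h
  · simp only [if_neg htr, if_neg (fun hh : r = t => htr hh.symm)] at h ⊢
    linear_combination h

lemma keyXYo (hq1 : q i ≠ 1) (H : OpRel q i a c a' c') {r t : Fin m} (htr : t ≠ r) :
    a t * c' r + a' t * c r = 0 := by
  have h := keyX H r t
  rw [if_neg htr, if_neg htr, if_neg (fun hh : r = t => htr hh.symm), add_zero] at h
  have h2 : (1 - q i) * (a t * c' r + a' t * c r) = 0 := by linear_combination h
  rcases mul_eq_zero.mp h2 with h3 | h3
  · exact absurd (sub_eq_zero.mp h3).symm hq1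
  · exact h3

lemma keyD (H : OpRel q i a c a' c') (r : Fin m) :
    (q r - q i) * (a r * c' r) + (1 - q i * q r) * (a' r * c r) = 0 := by
  have h := keyX H r r
  rw [if_pos rfl, if_pos rfl, if_pos rfl] at h
  have h0 := key0 H
  linear_combination h - h0

end Extract

section Classify
variable (q : Fin m → k)

lemma Top_zero : Top q (0 : Fin m → k) 0 = 0 := by
  simp [Top, Lop]

lemma classify (hq1 : ∀ j, q j ≠ 1) (hqq : ∀ j l, q j * q l ≠ 1) (i : Fin m)
    {a c a' c' : Fin m → k}
    (H : OpRel q i a c a' c') :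
    ∃ j : Fin m, q j = q i ∧ c = 0 ∧ a' = 0 ∧
      (∀ l, l ≠ j → a l = 0) ∧ (∀ l, l ≠ j → c' l = 0) ∧ a j * c' j = 1 := by
  have hqr : ∀ r, q r * q r ≠ 1 := fun r => hqq r r
  have hX := keyXdichot (hq1 i) H
  have hY := keyYdichot (hq1 i) hqr H
  have key0' := key0 H
  -- rule out `Top = 0` degeneracies
  have hnontriv : ∀ a₀ c₀ a₁ c₁ : Fin m → k, OpRel q i a₀ c₀ a₁ c₁ →
      ¬(a₀ = 0 ∧ c₀ = 0) := by
    rintro a₀ c₀ a₁ c₁ H₀ ⟨rfl, rfl⟩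
    rw [OpRel, Top_zero, mul_zero, zero_mul, smul_zero, zero_add] at H₀
    have := LinearMap.congr_fun H₀ (1 : MvPolynomial (Fin m) k)
    simp only [LinearMap.zero_apply, Module.End.one_apply] at this
    exact one_ne_zero this.symm
  have hnontriv' : ¬(a' = 0 ∧ c' = 0) := by
    rintro ⟨rfl, rfl⟩
    rw [OpRel, Top_zero, zero_mul, mul_zero, smul_zero, zero_add] at H
    have := LinearMap.congr_fun H (1 : MvPolynomial (Fin m) k)
    simp only [LinearMap.zero_apply, Module.End.one_apply] at this
    exact one_ne_zero this.symm
  rcases hX with ha | ha'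
  · -- a = 0 : show c' = 0 leads to contradiction, and c = 0 leads to contradiction
    exfalso
    rcases hY with hc | hc'
    · exact hnontriv a c a' c' H ⟨ha, hc⟩
    · -- bad case : a = 0, c' = 0
      have hs : (∑ j, a j * c' j) = 0 := by
        refine Finset.sum_eq_zero fun j _ => ?_
        rw [ha, Pi.zero_apply, zero_mul]
      rw [hs] at key0'
      have hac : ∀ r, a' r * c r = 0 := by
        intro r
        have hd := keyD H r
        rw [ha, hc'] at hd
        simp only [Pi.zero_apply, mul_zero, zero_mul, add_zero, zero_add] at hd
        rcases mul_eq_zero.mp hd with h | h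
        · exact absurd (by linear_combination -h : q i * q r = 1) (hqq i r)
        · exact h
      have hs' : (∑ j, a' j * c j) = 0 := Finset.sum_eq_zero fun j _ => hac j
      rw [hs', mul_zero, zero_add] at key0'
      exact one_ne_zero key0'.symm
  · -- a' = 0
    rcases hY with hc | hc'
    · -- good case
      have hs : (∑ l, a l * c' l) = 1 := by
        have hz : (∑ j, a' j * c j) = 0 := by
          refine Finset.sum_eq_zero fun j _ => ?_
          rw [ha', Pi.zero_apply, zero_mul]
        rw [key0', hz, mul_zero, zero_add]
      obtain ⟨j, _, hj⟩ := Finset.exists_ne_zero_of_sum_ne_zero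
        (by rw [hs]; exact one_ne_zero : (∑ l, a l * c' l) ≠ 0)
      have haj : a j ≠ 0 := fun h => hj (by rw [h, zero_mul])
      have hcj : c' j ≠ 0 := fun h => hj (by rw [h, mul_zero])
      have hqj : q j = q i := by
        have hd := keyD H j
        rw [ha', hc] at hd
        simp only [Pi.zero_apply, mul_zero, zero_mul, add_zero] at hd
        rcases mul_eq_zero.mp hd with h | h
        · exact sub_eq_zero.mp h
        · exact absurd h hj
      have hal : ∀ l, l ≠ j → a l = 0 := by
        intro l hl
        have h2 := keyXYo (hq1 i) H (r := j) (t := l) hl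
        rw [ha'] at h2
        simp only [Pi.zero_apply, zero_mul, add_zero] at h2
        rcases mul_eq_zero.mp h2 with h | h
        · exact h
        · exact absurd h hcj
      have hcl : ∀ l, l ≠ j → c' l = 0 := by
        intro l hl
        have h2 := keyXYo (hq1 i) H (r := l) (t := j) (Ne.symm hl)
        rw [ha'] at h2
        simp only [Pi.zero_apply, zero_mul, add_zero] at h2
        rcases mul_eq_zero.mp h2 with h | h
        · exact absurd h haj
        · exact h
      have hone : a j * c' j = 1 := by
        rw [← hs, Finset.sum_eq_single j]
        · intro l _ hl
          rw [hal l hl, zero_mul]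
        · intro h
          exact absurd (Finset.mem_univ j) h
      exact ⟨j, hqj, hc, ha', hal, hcl, hone⟩
    · exact absurd ⟨ha', hc'⟩ hnontriv'

end Classify

section Assemble
variable (q : Fin m → k)

lemma exists_coords {v : TWeyl k m q}
    (hv : v ∈ Submodule.span k
      (Set.range (TWeyl.x k m q) ∪ Set.range (TWeyl.y k m q))) :
    ∃ a c : Fin m → k,
      v = (∑ j, a j • TWeyl.x k m q j) + (∑ j, c j • TWeyl.y k m q j) := by
  rw [← Set.Sum.elim_range] at hv
  obtain ⟨co, hco⟩ := (Submodule.mem_span_range_iff_exists_fun k).mp hv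
  refine ⟨fun j => co (Sum.inl j), fun j => co (Sum.inr j), ?_⟩
  rw [← hco, Fintype.sum_sum_type]
  simp only [Sum.elim_inl, Sum.elim_inr]

lemma rep1_comb (a c : Fin m → k) :
    rep1 q (∑ j, a j • TWeyl.x k m q j) + rep1 q (∑ j, c j • TWeyl.y k m q j)
      = Top q a c := by
  rw [map_sum, map_sum]
  simp only [map_smul, rep1_x, rep1_y]
  rfl

lemma tweyl_rel (i : Fin m) :
    TWeyl.y k m q i * TWeyl.x k m q i
      = algebraMap k (TWeyl k m q) (q i) * (TWeyl.x k m q i * TWeyl.y k m q i) + 1 := by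
  have hr : tWeylRel k m q
      (FreeAlgebra.ι k (i, true) * FreeAlgebra.ι k (i, false))
      (algebraMap k _ (q i) *
        (FreeAlgebra.ι k (i, false) * FreeAlgebra.ι k (i, true)) + 1) :=
    Or.inl ⟨i, rfl, rfl⟩
  have h := RingQuot.mkAlgHom_rel k hr
  simp only [map_mul, map_add, map_one, AlgHom.commutes] at h
  exact h

end Assemble

end TWAux

open TWAux

/-- Let `B = A_{q_1} ⊗ ⋯ ⊗ A_{q_m}` with all `q_i ≠ 1` and
`q_i q_j ≠ 1` for all `i, j`.  Then every affine automorphism `g` of `B` with zero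
constant terms (each `g x_i`, `g y_i` lies in `span {x_1, …, x_m, y_1, …, y_m}`) has the
form `g x_i = b_i x_{σ i}`, `g y_i = b_i⁻¹ y_{σ i}` for a permutation `σ ∈ S_m` and
scalars `b_i ∈ k^×`, and moreover `q_{σ i} = q_i` for all `i`. -/
theorem affine_automorphism_is_diagonal_times_permutation
    (k : Type*) [Field k] (m : ℕ) (q : Fin m → k) (hq : ∀ i, q i ≠ 1)
    (hqq : ∀ i j, q i * q j ≠ 1)
    (g : TWeyl k m q ≃ₐ[k] TWeyl k m q)
    (haff : ∀ i : Fin m,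
      g (TWeyl.x k m q i) ∈ Submodule.span k
        (Set.range (TWeyl.x k m q) ∪ Set.range (TWeyl.y k m q)) ∧
      g (TWeyl.y k m q i) ∈ Submodule.span k
        (Set.range (TWeyl.x k m q) ∪ Set.range (TWeyl.y k m q))) :
    ∃ (σ : Equiv.Perm (Fin m)) (b : Fin m → kˣ),
      ∀ i : Fin m,
        g (TWeyl.x k m q i) = (b i : k) • TWeyl.x k m q (σ i) ∧
        g (TWeyl.y k m q i) = (((b i)⁻¹ : kˣ) : k) • TWeyl.y k m q (σ i) ∧
        q (σ i) = q i := by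
  classical
  have hmain : ∀ i : Fin m, ∃ j : Fin m, ∃ bv : k, bv ≠ 0 ∧ q j = q i ∧
      g (TWeyl.x k m q i) = bv • TWeyl.x k m q j ∧
      g (TWeyl.y k m q i) = bv⁻¹ • TWeyl.y k m q j := by
    intro i
    obtain ⟨a, c, hgx⟩ := exists_coords q (haff i).1
    obtain ⟨a', c', hgy⟩ := exists_coords q (haff i).2
    -- transport the defining relation through `g` and `rep1`
    have hrel : g (TWeyl.y k m q i) * g (TWeyl.x k m q i)
        = algebraMap k (TWeyl k m q) (q i) *
            (g (TWeyl.x k m q i) * g (TWeyl.y k m q i)) + 1 := by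
      have h := congrArg g (tweyl_rel q i)
      simpa only [map_mul, map_add, map_one, AlgEquiv.commutes] using h
    have hop : OpRel q i a c a' c' := by
      have h := congrArg (rep1 q) hrel
      rw [hgx, hgy] at h
      simp only [map_mul, map_add, map_one, AlgHom.commutes] at h
      rw [rep1_comb, rep1_comb] at h
      rw [OpRel, h, Algebra.algebraMap_eq_smul_one, smul_mul_assoc, one_mul]
    obtain ⟨j, hqj, hc0, ha'0, hal, hcl, hone⟩ := classify q hq hqq i hop
    refine ⟨j, a j, fun h => by rw [h, zero_mul] at hone; exact one_ne_zero hone.symm,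
      hqj, ?_, ?_⟩
    · rw [hgx, hc0]
      simp only [Pi.zero_apply, zero_smul, Finset.sum_const_zero, add_zero]
      rw [Finset.sum_eq_single j]
      · intro l _ hl
        rw [hal l hl, zero_smul]
      · intro h
        exact absurd (Finset.mem_univ j) h
    · rw [hgy, ha'0]
      simp only [Pi.zero_apply, zero_smul, Finset.sum_const_zero, zero_add]
      rw [Finset.sum_eq_single j]
      · rw [inv_eq_of_mul_eq_one_right hone]
      · intro l _ hl
        rw [hcl l hl, zero_smul]
      · intro h
        exact absurd (Finset.mem_univ j) h
  choose f bv hb hqf hgx hgy using hmain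
  have hinj : Function.Injective f := by
    intro i i' hf
    by_contra hne
    have h1 : g (TWeyl.x k m q i) = g ((bv i * (bv i')⁻¹) • TWeyl.x k m q i') := by
      rw [map_smul, hgx i, hgx i', hf, smul_smul]
      congr 1
      rw [mul_assoc, inv_mul_cancel₀ (hb i'), mul_one]
    have h2 := g.injective h1
    have h3 := congrArg (fun z => rep1 q z (1 : MvPolynomial (Fin m) k)) h2
    simp only [map_smul, rep1_x, LinearMap.smul_apply, Mx_apply, mul_one] at h3
    have h4 := congrArg (MvPolynomial.coeff (Finsupp.single i 1)) h3
    rw [MvPolynomial.coeff_smul, coeff_single_X, coeff_single_X, if_pos rfl,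
      if_neg (fun h : i' = i => hne h.symm)] at h4
    simp only [smul_eq_mul, mul_zero] at h4
    exact one_ne_zero h4
  refine ⟨Equiv.ofBijective f (Finite.injective_iff_bijective.mp hinj),
    fun i => Units.mk0 (bv i) (hb i), fun i => ?_⟩
  refine ⟨?_, ?_, ?_⟩
  · rw [hgx i]; rfl
  · rw [hgy i, Units.val_inv_eq_inv_val]; rfl
  · exact hqf i
end
end
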